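/- arXiv:2412.13642 — 12 statements merged into one kernel-verified Lean document; each statement's English description precedes it below -/
import Mathlib

section
/- Let m ∈ ℕ, m ≥ 2, and let θ ≥ 2/m be real. Then for all real x with 0 ≤ x ≤ 1, (1+x)^{mθ} - (1 - 1/m) x^{mθ-1} - 1 ≥ 0. -/
theorem nonnegativity_aux (m : ℕ) (hm : 2 ≤ m) (θ : ℝ) (hθ : 2 / (m : ℝ) ≤ θ)
    (x : ℝ) (hx0 : 0 ≤ x) (hx1 : x ≤ 1) :
    0 ≤ (1 + x) ^ ((m : ℝ) * θ) - (1 - 1 / (m : ℝ)) * x ^ ((m : ℝ) * θ - 1) - 1 := by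
  have hm0 : (0:ℝ) < (m:ℝ) := by positivity
  have hp : (2:ℝ) ≤ (m:ℝ) * θ := by
    have := mul_le_mul_of_nonneg_left hθ hm0.le
    rwa [mul_div_cancel₀ _ hm0.ne'] at this
  set p : ℝ := (m : ℝ) * θ with hpdef
  have h1 : 1 + x ≤ (1 + x) ^ p := by
    calc 1 + x = (1 + x) ^ (1:ℝ) := (Real.rpow_one _).symm
    _ ≤ (1 + x) ^ p := Real.rpow_le_rpow_of_exponent_le (by linarith) (by linarith)
  have h2 : x ^ (p - 1) ≤ x := by
    rcases eq_or_lt_of_le hx0 with h | h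
    · rw [← h, Real.zero_rpow (by norm_num; linarith)]
    · calc x ^ (p - 1) ≤ x ^ (1:ℝ) :=
            Real.rpow_le_rpow_of_exponent_ge h hx1 (by linarith)
      _ = x := Real.rpow_one _
  have h3 : (1 - 1 / (m:ℝ)) * x ^ (p - 1) ≤ x ^ (p - 1) := by
    have : (0:ℝ) ≤ x ^ (p - 1) := Real.rpow_nonneg hx0 _
    nlinarith [one_div_pos.mpr hm0]
  linarith
end

section
/- Let m ≥ 2 be an integer, λ ∈ ℂ \ {0}, and define p_{λ,k} by p_{λ,0} = 1 and p_{λ,k+1}(x) = λ x^{m-1} p_{λ,k}(x) + p_{λ,k}'(x). Then for each k ≥ 1 there exist positive integers C_{k,n}, 0 ≤ n ≤ ⌊k(m-1)/m⌋, with C_{k,0} = 1, such that p_{λ,k}(x) = Σ_{n=0}^{⌊k(m-1)/m⌋} λ^{k-n} x^{(m-1)k - nm} C_{k,n}. -/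
/-!
Write `p k = ∑ₙ λ^(k-n) C k n X^((m-1)k - nm)`. Multiplying the `n`-th term by `λ X^(m-1)`
gives a term of the same shape for `k + 1`, while differentiating it gives the shape of the
`(n+1)`-th term for `k + 1`, with the extra factor `(m-1)k - nm`. Hence the coefficients obey the
Pascal-type recursion `C (k+1) (n+1) = C k (n+1) + ((m-1)k - nm) C k n`, which keeps them
nonnegative integers, and an induction on `k` shows that they vanish exactly when `nm > (m-1)k`.
-/

open Polynomial Finset

/-- Truncated subtraction in `(m - 1) * k - n * m` is harmless: `expansionCoeff m k n` vanishes
unless `n * m ≤ (m - 1) * k`. -/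
def expansionCoeff (m : ℕ) : ℕ → ℕ → ℕ
  | 0, n => if n = 0 then 1 else 0
  | k + 1, 0 => expansionCoeff m k 0
  | k + 1, n + 1 => expansionCoeff m k (n + 1) + ((m - 1) * k - n * m) * expansionCoeff m k n

namespace expansionCoeff

variable {m : ℕ}

@[simp]
theorem zero_right (k : ℕ) : expansionCoeff m k 0 = 1 := by
  induction k with
  | zero => rfl
  | succ k ih => exact ih

theorem eq_zero_of_lt {k n : ℕ} (h : (m - 1) * k < n * m) : expansionCoeff m k n = 0 := by
  induction k generalizing n with
  | zero =>
    obtain _ | n := n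
    · simp at h
    · rfl
  | succ k ih =>
    obtain _ | n := n
    · simp at h
    have hmk := mul_add_one (m - 1) k
    have hnm := add_one_mul n m
    have hsucc : expansionCoeff m k (n + 1) = 0 := ih (by omega)
    rw [expansionCoeff, hsucc]
    rcases lt_or_ge ((m - 1) * k) (n * m) with hlt | hge
    · simp [ih hlt]
    · simp [show (m - 1) * k - n * m = 0 by omega]

theorem pos (hm : 0 < m) {k n : ℕ} (h : n * m ≤ (m - 1) * k) : 0 < expansionCoeff m k n := by
  induction k generalizing n with
  | zero =>
    obtain rfl : n = 0 := by simpa [hm.ne'] using h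
    simp
  | succ k ih =>
    obtain _ | n := n
    · simp
    rw [expansionCoeff]
    by_cases hk : (n + 1) * m ≤ (m - 1) * k
    · exact Nat.lt_add_right _ (ih hk)
    · have hmk := mul_add_one (m - 1) k
      have hnm := add_one_mul n m
      exact Nat.lt_add_left _ (Nat.mul_pos (by omega) (ih (by omega)))

end expansionCoeff

section

variable {R : Type*} [CommSemiring R] (m : ℕ) (lam : R)

noncomputable def expansionTerm (k n : ℕ) : R[X] :=
  C (lam ^ (k - n) * expansionCoeff m k n) * X ^ ((m - 1) * k - n * m)

variable {m}

theorem expansionTerm_eq_zero {k n : ℕ} (h : (m - 1) * k < n * m) :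
    expansionTerm m lam k n = 0 := by
  simp [expansionTerm, expansionCoeff.eq_zero_of_lt h]

theorem expansionTerm_succ_zero (k : ℕ) :
    expansionTerm m lam (k + 1) 0 = C lam * X ^ (m - 1) * expansionTerm m lam k 0 := by
  simp only [expansionTerm, expansionCoeff.zero_right, Nat.cast_one, mul_one, Nat.sub_zero,
    zero_mul, mul_add_one, pow_add, pow_succ, map_mul]
  ring

theorem C_mul_X_pow_mul_expansionTerm (hm : 0 < m) (k n : ℕ) :
    C lam * X ^ (m - 1) * expansionTerm m lam k (n + 1) =
      C (lam ^ (k - n) * expansionCoeff m k (n + 1)) * X ^ ((m - 1) * (k + 1) - (n + 1) * m) := by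
  by_cases h : (n + 1) * m ≤ (m - 1) * k
  · have hnk : n + 1 ≤ k :=
      Nat.le_of_mul_le_mul_right
        (h.trans ((Nat.mul_le_mul_right k (Nat.sub_le m 1)).trans_eq (mul_comm m k))) hm
    have hmk := mul_add_one (m - 1) k
    rw [expansionTerm, show k - n = k - (n + 1) + 1 by omega,
      show (m - 1) * (k + 1) - (n + 1) * m = (m - 1) * k - (n + 1) * m + (m - 1) by omega,
      pow_succ, pow_add]
    simp only [map_mul]
    ring
  · simp [expansionTerm, expansionCoeff.eq_zero_of_lt (not_le.mp h)]

theorem derivative_expansionTerm (hm : 0 < m) (k n : ℕ) :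
    derivative (expansionTerm m lam k n) =
      C (lam ^ (k - n) * (((m - 1) * k - n * m) * expansionCoeff m k n : ℕ)) *
        X ^ ((m - 1) * (k + 1) - (n + 1) * m) := by
  have hmk := mul_add_one (m - 1) k
  have hnm := add_one_mul n m
  rw [expansionTerm, derivative_C_mul_X_pow]
  by_cases h : n * m ≤ (m - 1) * k
  · rw [show (m - 1) * (k + 1) - (n + 1) * m = (m - 1) * k - n * m - 1 by omega]
    congr 2
    push_cast
    ring
  · simp [show (m - 1) * k - n * m = 0 by omega]

theorem expansionTerm_succ_succ (hm : 0 < m) (k n : ℕ) :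
    expansionTerm m lam (k + 1) (n + 1) =
      C lam * X ^ (m - 1) * expansionTerm m lam k (n + 1) +
        derivative (expansionTerm m lam k n) := by
  rw [C_mul_X_pow_mul_expansionTerm lam hm, derivative_expansionTerm lam hm, ← add_mul,
    ← map_add, expansionTerm, expansionCoeff, Nat.add_sub_add_right]
  congr 2
  push_cast
  ring

theorem sum_expansionTerm_succ (hm : 0 < m) (k : ℕ) :
    ∑ n ∈ range (k + 2), expansionTerm m lam (k + 1) n =
      C lam * X ^ (m - 1) * ∑ n ∈ range (k + 1), expansionTerm m lam k n +
        derivative (∑ n ∈ range (k + 1), expansionTerm m lam k n) := by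
  have hlast : expansionTerm m lam k (k + 1) = 0 := by
    apply expansionTerm_eq_zero
    have hkm := add_one_mul k m
    have hk : (m - 1) * k ≤ m * k := Nat.mul_le_mul_right k (Nat.sub_le m 1)
    rw [mul_comm m k] at hk
    omega
  have hshift : ∑ n ∈ range (k + 1), expansionTerm m lam k n =
      expansionTerm m lam k 0 + ∑ n ∈ range (k + 1), expansionTerm m lam k (n + 1) := by
    calc ∑ n ∈ range (k + 1), expansionTerm m lam k n
        = ∑ n ∈ range (k + 2), expansionTerm m lam k n := by
          rw [sum_range_succ _ (k + 1), hlast, add_zero]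
      _ = _ := by rw [sum_range_succ', add_comm (∑ n ∈ range (k + 1), _)]
  rw [sum_range_succ', expansionTerm_succ_zero, derivative_sum]
  simp only [expansionTerm_succ_succ lam hm, sum_add_distrib]
  conv_rhs => rw [hshift, mul_add, mul_sum]
  ring

theorem eq_sum_expansionTerm (hm : 0 < m) {p : ℕ → R[X]} (hp0 : p 0 = 1)
    (hprec : ∀ k, p (k + 1) = C lam * X ^ (m - 1) * p k + derivative (p k)) (k : ℕ) :
    p k = ∑ n ∈ range (k + 1), expansionTerm m lam k n := by
  induction k with
  | zero => simp [hp0, expansionTerm]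
  | succ k ih => rw [hprec, ih, sum_expansionTerm_succ lam hm]

theorem sum_range_expansionTerm_eq_sum_range_div (hm : 0 < m) (k : ℕ) :
    ∑ n ∈ range (k + 1), expansionTerm m lam k n =
      ∑ n ∈ range (k * (m - 1) / m + 1), expansionTerm m lam k n := by
  refine (sum_subset (fun n hn => ?_) fun n _ hn => expansionTerm_eq_zero lam ?_).symm
  · simp only [mem_range, Nat.lt_succ_iff] at hn ⊢
    exact hn.trans <| Nat.div_le_of_le_mul <|
      (Nat.mul_le_mul_left k (Nat.sub_le m 1)).trans_eq (mul_comm k m)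
  · simp only [mem_range, Nat.lt_succ_iff, Nat.le_div_iff_mul_le hm, not_le] at hn
    rwa [mul_comm]

end

theorem derivative_polynomial_expansion_general (m : ℕ) (hm : 2 ≤ m) (lam : ℂ)
    (p : ℕ → Polynomial ℂ) (hp0 : p 0 = 1)
    (hprec : ∀ k, p (k + 1) =
      Polynomial.C lam * Polynomial.X ^ (m - 1) * p k + Polynomial.derivative (p k)) :
    ∀ k : ℕ, 1 ≤ k → ∃ C : ℕ → ℕ, C 0 = 1 ∧
      (∀ n, n ≤ k * (m - 1) / m → 0 < C n) ∧
      p k = ∑ n ∈ Finset.range (k * (m - 1) / m + 1),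
        Polynomial.C (lam ^ (k - n) * (C n : ℂ)) * Polynomial.X ^ ((m - 1) * k - n * m) := by
  have hm0 : 0 < m := by omega
  intro k _
  refine ⟨expansionCoeff m k, expansionCoeff.zero_right k, fun n hn => ?_, ?_⟩
  · rw [Nat.le_div_iff_mul_le hm0, mul_comm k] at hn
    exact expansionCoeff.pos hm0 hn
  · rw [eq_sum_expansionTerm lam hm0 hp0 hprec, sum_range_expansionTerm_eq_sum_range_div lam hm0]
    rfl

theorem derivative_polynomial_expansion (m : ℕ) (hm : 2 ≤ m) (lam : ℂ) (hlam : lam ≠ 0)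
    (p : ℕ → Polynomial ℂ) (hp0 : p 0 = 1)
    (hprec : ∀ k, p (k + 1) =
      Polynomial.C lam * Polynomial.X ^ (m - 1) * p k + Polynomial.derivative (p k)) :
    ∀ k : ℕ, 1 ≤ k → ∃ C : ℕ → ℕ, C 0 = 1 ∧
      (∀ n, n ≤ k * (m - 1) / m → 0 < C n) ∧
      p k = ∑ n ∈ Finset.range (k * (m - 1) / m + 1),
        Polynomial.C (lam ^ (k - n) * (C n : ℂ)) * Polynomial.X ^ ((m - 1) * k - n * m) :=
  derivative_polynomial_expansion_general m hm lam p hp0 hprec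
end

section
/- Let m ≥ 2 and let C_{k,n} be the coefficients in the expansion p_{λ,k}(x) = Σ_n λ^{k-n} x^{(m-1)k-nm} C_{k,n} of the polynomials from differentiation of e^{λ x^m/m}. Then for k ≥ 2 and 1 ≤ n ≤ ⌊k(m-1)/m⌋ one has C_{k+1,n} = C_{k,n} + C_{k,n-1}((m-1)k - m(n-1)); moreover if m does not divide k and n = ⌊(k+1)(m-1)/m⌋ then C_{k+1,n} = C_{k,n-1}((m-1)k - m(n-1)). -/
/-!
Compare the coefficients of `X ^ ((m - 1) * (k + 1) - n * m)` on both sides of the recursion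
`p (k + 1) = λ X ^ (m - 1) p k + (p k)'`. Multiplication by `λ X ^ (m - 1)` contributes the
term `λ ^ (k + 1 - n) C k n` of `p k` (when it exists, i.e. `n * m ≤ (m - 1) * k`), and
differentiation contributes the term `λ ^ (k + 1 - n) C k (n - 1)` times its exponent
`(m - 1) * k - m * (n - 1)`. Cancelling `λ ^ (k + 1 - n)` gives both identities; the second
one is the case where the first contribution is absent, which happens for
`n = ⌊(k + 1)(m - 1) / m⌋` exactly when `m ∤ k`.
-/

open Polynomial Finset

theorem Polynomial.coeff_sum_C_mul_X_pow_sub {R : Type*} [Semiring R] (a : ℕ → R)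
    {d m N n : ℕ} (hm : 0 < m) (hN : N * m ≤ d) (hn : n ≤ N) :
    (∑ j ∈ range (N + 1), C (a j) * X ^ (d - j * m)).coeff (d - n * m) = a n := by
  rw [finsetSum_coeff, sum_eq_single n]
  · rw [coeff_C_mul_X_pow, if_pos rfl]
  · intro j hj hjn
    rw [mem_range] at hj
    have hjN : j * m ≤ N * m := Nat.mul_le_mul_right m (by omega)
    have hnN : n * m ≤ N * m := Nat.mul_le_mul_right m hn
    rw [coeff_C_mul_X_pow, if_neg]
    intro h
    exact hjn (Nat.eq_of_mul_eq_mul_right hm (by omega)).symm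
  · intro h
    exact absurd (mem_range.mpr (by omega)) h

theorem Nat.lt_div_mul_of_not_dvd {m k : ℕ} (hm : 0 < m) (hk : ¬ m ∣ k) :
    (m - 1) * k < (k + 1) * (m - 1) / m * m := by
  by_contra! hle
  have hlt := Nat.lt_div_mul_add (a := (k + 1) * (m - 1)) hm
  have heq : (m - 1) * k = (k + 1) * (m - 1) / m * m := by
    have : (k + 1) * (m - 1) = (m - 1) * k + (m - 1) := by ring
    omega
  have hcop : Nat.Coprime m (m - 1) :=
    (Nat.coprime_self_sub_right hm).mpr (Nat.coprime_one_right m)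
  exact hk (hcop.dvd_of_dvd_mul_left ⟨_, heq.trans (mul_comm _ _)⟩)

section Recursion

variable {m : ℕ} {lam : ℂ} {p : ℕ → ℂ[X]} {C : ℕ → ℕ → ℕ}

theorem coeff_eq_of_expansion (hm : 0 < m)
    (hC : ∀ k : ℕ, 1 ≤ k →
      p k = ∑ n ∈ range (k * (m - 1) / m + 1),
        Polynomial.C (lam ^ (k - n) * (C k n : ℂ)) * X ^ ((m - 1) * k - n * m))
    {k n : ℕ} (hk : 1 ≤ k) (hn : n * m ≤ (m - 1) * k) :
    (p k).coeff ((m - 1) * k - n * m) = lam ^ (k - n) * C k n := by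
  rw [hC k hk]
  refine coeff_sum_C_mul_X_pow_sub (fun j ↦ lam ^ (k - j) * (C k j : ℂ)) hm
    (by rw [mul_comm (m - 1)]; exact Nat.div_mul_le_self _ _) ?_
  rw [Nat.le_div_iff_mul_le hm, mul_comm k]
  exact hn

theorem C_succ_eq_ite_add (hm : 0 < m) (hlam : lam ≠ 0)
    (hprec : ∀ k, p (k + 1) = Polynomial.C lam * X ^ (m - 1) * p k + derivative (p k))
    (hC : ∀ k : ℕ, 1 ≤ k →
      p k = ∑ n ∈ range (k * (m - 1) / m + 1),
        Polynomial.C (lam ^ (k - n) * (C k n : ℂ)) * X ^ ((m - 1) * k - n * m))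
    {k n : ℕ} (hk : 1 ≤ k) (hn1 : 1 ≤ n) (hn : n * m ≤ (m - 1) * (k + 1)) :
    C (k + 1) n
      = (if n * m ≤ (m - 1) * k then C k n else 0) + C k (n - 1) * ((m - 1) * k - m * (n - 1)) := by
  set i := (m - 1) * (k + 1) - n * m
  have hsplit : (m - 1) * (k + 1) = (m - 1) * k + (m - 1) := by ring
  have hnm : n * m = (n - 1) * m + m := by
    rw [← Nat.succ_mul, Nat.succ_eq_add_one, Nat.sub_add_cancel hn1]
  have hlhs := coeff_eq_of_expansion hm hC (k := k + 1) (by omega) hn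
  have hsucc : i + 1 = (m - 1) * k - (n - 1) * m := by omega
  have hprev := coeff_eq_of_expansion hm hC hk (n := n - 1) (by omega)
  have hcoeff := congrArg (coeff · i) (hprec k)
  simp only [coeff_add, mul_assoc, coeff_C_mul, coeff_X_pow_mul', coeff_derivative] at hcoeff
  rw [hlhs, hsucc, hprev] at hcoeff
  have hpow : lam ^ (k - (n - 1)) = lam ^ (k + 1 - n) := by congr 1; omega
  have hcast : (i : ℂ) + 1 = (((m - 1) * k - m * (n - 1) : ℕ) : ℂ) := by
    rw [mul_comm m, ← hsucc]; push_cast; ring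
  rw [hpow, hcast] at hcoeff
  apply Nat.cast_injective (R := ℂ)
  apply mul_left_cancel₀ (pow_ne_zero (k + 1 - n) hlam)
  by_cases hle : n * m ≤ (m - 1) * k
  · have hshift : i - (m - 1) = (m - 1) * k - n * m := by omega
    rw [if_pos (by omega), hshift, coeff_eq_of_expansion hm hC hk hle] at hcoeff
    have hnk : n ≤ k := Nat.le_of_mul_le_mul_right
      (hle.trans (by rw [mul_comm k]; exact Nat.mul_le_mul_right k (Nat.sub_le m 1))) hm
    have hpow' : lam * lam ^ (k - n) = lam ^ (k + 1 - n) := by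
      rw [← pow_succ']; congr 1; omega
    rw [if_pos hle]
    push_cast
    linear_combination hcoeff + (C k n : ℂ) * hpow'
  · rw [if_neg (by omega)] at hcoeff
    rw [if_neg hle]
    push_cast
    linear_combination hcoeff

end Recursion

theorem coefficient_recursion_general (m : ℕ) (hm : 2 ≤ m) (lam : ℂ) (hlam : lam ≠ 0)
    (p : ℕ → Polynomial ℂ)
    (hprec : ∀ k, p (k + 1) =
      Polynomial.C lam * Polynomial.X ^ (m - 1) * p k + Polynomial.derivative (p k))
    (C : ℕ → ℕ → ℕ)
    (hC : ∀ k : ℕ, 1 ≤ k →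
      p k = ∑ n ∈ Finset.range (k * (m - 1) / m + 1),
        Polynomial.C (lam ^ (k - n) * (C k n : ℂ)) * Polynomial.X ^ ((m - 1) * k - n * m)) :
    ∀ k : ℕ, 2 ≤ k →
      (∀ n : ℕ, 1 ≤ n → n ≤ k * (m - 1) / m →
        C (k + 1) n = C k n + C k (n - 1) * ((m - 1) * k - m * (n - 1))) ∧
      (¬ m ∣ k →
        C (k + 1) ((k + 1) * (m - 1) / m)
          = C k ((k + 1) * (m - 1) / m - 1)
            * ((m - 1) * k - m * ((k + 1) * (m - 1) / m - 1))) := by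
  intro k hk
  have hm0 : 0 < m := by omega
  refine ⟨fun n hn1 hn ↦ ?_, fun hdvd ↦ ?_⟩
  · have hnm : n * m ≤ (m - 1) * k := by
      rw [mul_comm (m - 1)]; exact (Nat.le_div_iff_mul_le hm0).mp hn
    rw [C_succ_eq_ite_add hm0 hlam hprec hC (by omega) hn1 (by nlinarith), if_pos hnm]
  · set N := (k + 1) * (m - 1) / m
    have hN : N * m ≤ (m - 1) * (k + 1) := by
      rw [mul_comm (m - 1)]; exact Nat.div_mul_le_self _ _
    have hN1 : 1 ≤ N := by
      have : 3 * (m - 1) ≤ (k + 1) * (m - 1) := Nat.mul_le_mul_right _ (by omega)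
      rw [Nat.le_div_iff_mul_le hm0]; omega
    rw [C_succ_eq_ite_add hm0 hlam hprec hC (by omega) hN1 hN,
      if_neg (Nat.lt_div_mul_of_not_dvd hm0 hdvd).not_ge, zero_add]

theorem coefficient_recursion (m : ℕ) (hm : 2 ≤ m) (lam : ℂ) (hlam : lam ≠ 0)
    (p : ℕ → Polynomial ℂ) (hp0 : p 0 = 1)
    (hprec : ∀ k, p (k + 1) =
      Polynomial.C lam * Polynomial.X ^ (m - 1) * p k + Polynomial.derivative (p k))
    (C : ℕ → ℕ → ℕ)
    (hC : ∀ k : ℕ, 1 ≤ k →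
      p k = ∑ n ∈ Finset.range (k * (m - 1) / m + 1),
        Polynomial.C (lam ^ (k - n) * (C k n : ℂ)) * Polynomial.X ^ ((m - 1) * k - n * m)) :
    ∀ k : ℕ, 2 ≤ k →
      (∀ n : ℕ, 1 ≤ n → n ≤ k * (m - 1) / m →
        C (k + 1) n = C k n + C k (n - 1) * ((m - 1) * k - m * (n - 1))) ∧
      (¬ m ∣ k →
        C (k + 1) ((k + 1) * (m - 1) / m)
          = C k ((k + 1) * (m - 1) / m - 1)
            * ((m - 1) * k - m * ((k + 1) * (m - 1) / m - 1))) :=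
  coefficient_recursion_general m hm lam hlam p hprec C hC
end

section
/- Let m ≥ 2 and let C_{k,n} be the coefficients of the polynomials p_{λ,k} from differentiating e^{λ x^m/m}, so p_{λ,k}(x) = Σ_n λ^{k-n} x^{(m-1)k-nm} C_{k,n}. Then for every k ≥ 2, C_{k,1} = (m-1)k(k-1)/2. -/
/-!
With `d = m - 1`, the recurrence makes the top coefficient of `p k`, in degree `d k`, equal to
`λ ^ k`. The next coefficient that can be nonzero sits in degree `d k - m`; there the
recurrence reads `c (k + 1) = λ c k + d k λ ^ k`, the second term coming from differentiating
the top term of `p k`. Hence `c k = d (k choose 2) λ ^ (k - 1)`, and comparing with the given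
expansion gives `C k 1 = d (k choose 2)` after cancelling `λ ^ (k - 1)`.
-/

open Polynomial

namespace DerivativeRecurrence

variable {R : Type*} [CommSemiring R] (lam : R) (d : ℕ) {p : ℕ → R[X]}

theorem coeff_succ (hprec : ∀ k, p (k + 1) = C lam * X ^ d * p k + derivative (p k)) (k j : ℕ) :
    (p (k + 1)).coeff j =
      (if d ≤ j then lam * (p k).coeff (j - d) else 0) + (p k).coeff (j + 1) * (j + 1) := by
  rw [hprec, coeff_add, mul_assoc, coeff_C_mul, coeff_X_pow_mul', coeff_derivative]
  split_ifs <;> simp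

variable {lam d}

theorem coeff_eq_zero_of_lt (hp0 : p 0 = 1)
    (hprec : ∀ k, p (k + 1) = C lam * X ^ d * p k + derivative (p k)) :
    ∀ k j, d * k < j → (p k).coeff j = 0
  | 0, j, hj => by rw [hp0, coeff_one, if_neg (by omega)]
  | k + 1, j, hj => by
    rw [mul_add, mul_one] at hj
    rw [coeff_succ lam d hprec, coeff_eq_zero_of_lt hp0 hprec k (j + 1) (by omega),
      coeff_eq_zero_of_lt hp0 hprec k (j - d) (by omega)]
    simp

theorem coeff_mul_eq_pow (hp0 : p 0 = 1)
    (hprec : ∀ k, p (k + 1) = C lam * X ^ d * p k + derivative (p k)) :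
    ∀ k, (p k).coeff (d * k) = lam ^ k
  | 0 => by simp [hp0]
  | k + 1 => by
    rw [coeff_succ lam d hprec, mul_add, mul_one, if_pos (Nat.le_add_left _ _), Nat.add_sub_cancel,
      coeff_mul_eq_pow hp0 hprec k, coeff_eq_zero_of_lt hp0 hprec k _ (by omega)]
    ring

-- `d * k + (d - 1) = d * (k + 2) - (d + 1)`, the highest degree below the leading one that the
-- recurrence can reach.
theorem coeff_mul_add_pred_eq_choose (hd : 0 < d) (hp0 : p 0 = 1)
    (hprec : ∀ k, p (k + 1) = C lam * X ^ d * p k + derivative (p k)) :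
    ∀ k, (p (k + 2)).coeff (d * k + (d - 1)) = d * (k + 2).choose 2 * lam ^ (k + 1)
  | 0 => by
    rw [coeff_succ lam d hprec, if_neg (by omega), zero_add, mul_zero, zero_add,
      ← Nat.cast_add_one, Nat.sub_add_cancel hd, ← mul_one d, coeff_mul_eq_pow hp0 hprec]
    simp [mul_comm]
  | k + 1 => by
    have hidx : d * (k + 1) + (d - 1) + 1 = d * (k + 2) := by rw [mul_add, mul_add]; omega
    rw [coeff_succ lam d hprec, if_pos (by rw [mul_add]; omega), ← Nat.cast_add_one, hidx,
      show d * (k + 1) + (d - 1) - d = d * k + (d - 1) by rw [mul_add, mul_one]; omega,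
      coeff_mul_add_pred_eq_choose hd hp0 hprec k, coeff_mul_eq_pow hp0 hprec, Nat.choose_succ_succ' (k + 2),
      Nat.choose_one_right]
    push_cast
    ring

end DerivativeRecurrence

theorem coeff_sum_C_mul_X_pow_sub_mul {R : Type*} [Semiring R] {m D N i : ℕ} (a : ℕ → R)
    (hm : 0 < m) (hN : N * m ≤ D) (hi : i ≤ N) :
    (∑ n ∈ Finset.range (N + 1), C (a n) * X ^ (D - n * m)).coeff (D - i * m) = a i := by
  rw [finsetSum_coeff, Finset.sum_eq_single i]
  · rw [coeff_C_mul, coeff_X_pow, if_pos rfl, mul_one]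
  · intro n hn hne
    have hnN : n * m ≤ N * m := Nat.mul_le_mul_right _ (Finset.mem_range_succ_iff.1 hn)
    have hiN : i * m ≤ N * m := Nat.mul_le_mul_right _ hi
    rw [coeff_C_mul, coeff_X_pow, if_neg, mul_zero]
    exact fun h ↦ hne (Nat.eq_of_mul_eq_mul_right hm (by omega))
  · exact fun h ↦ absurd (Finset.mem_range_succ_iff.2 hi) h

theorem coefficient_n_one (m : ℕ) (hm : 2 ≤ m) (lam : ℂ) (hlam : lam ≠ 0)
    (p : ℕ → Polynomial ℂ) (hp0 : p 0 = 1)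
    (hprec : ∀ k, p (k + 1) =
      Polynomial.C lam * Polynomial.X ^ (m - 1) * p k + Polynomial.derivative (p k))
    (C : ℕ → ℕ → ℕ)
    (hC : ∀ k : ℕ, 1 ≤ k →
      p k = ∑ n ∈ Finset.range (k * (m - 1) / m + 1),
        Polynomial.C (lam ^ (k - n) * (C k n : ℂ)) * Polynomial.X ^ ((m - 1) * k - n * m)) :
    ∀ k : ℕ, 2 ≤ k → C k 1 = (m - 1) * k * (k - 1) / 2 := by
  intro k hk
  have hN : k * (m - 1) / m * m ≤ (m - 1) * k := by
    rw [mul_comm (m - 1)]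
    exact Nat.div_mul_le_self _ _
  have hN1 : 1 ≤ k * (m - 1) / m :=
    (Nat.le_div_iff_mul_le (by omega)).2 ((by omega : 1 * m ≤ 2 * (m - 1)).trans
      (Nat.mul_le_mul_right _ hk))
  have hcoeff : (p k).coeff ((m - 1) * k - 1 * m) = lam ^ (k - 1) * C k 1 := by
    rw [hC k (by omega)]
    exact coeff_sum_C_mul_X_pow_sub_mul _ (by omega) hN hN1
  obtain ⟨j, rfl⟩ : ∃ j, k = j + 2 := ⟨k - 2, by omega⟩
  have hidx : (m - 1) * (j + 2) - 1 * m = (m - 1) * j + (m - 1 - 1) := by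
    rw [mul_add]
    omega
  rw [hidx, DerivativeRecurrence.coeff_mul_add_pred_eq_choose (by omega) hp0 hprec j,
    show j + 2 - 1 = j + 1 from rfl] at hcoeff
  have hC1 : (C (j + 2) 1 : ℂ) = ((m - 1) * (j + 2).choose 2 : ℕ) := by
    refine mul_left_cancel₀ (pow_ne_zero (j + 1) hlam) ?_
    push_cast
    rw [← hcoeff]
    ring
  rw [Nat.cast_inj.1 hC1, Nat.choose_two_right, mul_assoc,
    Nat.mul_div_assoc _ (Nat.even_mul_pred_self _).two_dvd]
end

section
/- Let m ≥ 2 be an integer and θ ≥ 2/m a real number. Let C_{k,n} be the coefficients of the polynomials obtained by differentiating e^{λ x^m/m}. Then for all k ≥ 2 and 0 ≤ n ≤ ⌊k(m-1)/m⌋ - 1, C_{k,n+1} ≤ C_{k,n} · m · k^{mθ}. -/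
/-!
Writing `p k = ∑ₙ λ^(k-n) C k n X^((m-1)k - nm)` and comparing the coefficients of
`X^((m-1)(k+1) - nm)` in `p (k+1) = λ X^(m-1) p k + p k'` gives the Pascal-type recurrence
`C (k+1) n = C k n + ((m-1)k - (n-1)m) C k (n-1)` (the first term absent when `n` exceeds
`⌊k(m-1)/m⌋`). In particular `C k n ≤ C (k+1) n`, and since the weight `(m-1)k - nm` is
at most `mk`, induction on `k` gives `C k (n+1) ≤ m k² C k n`. Finally `k² ≤ k^(mθ)`
because `mθ ≥ 2`.
-/

open Polynomial Finset

lemma mul_le_of_le_div_mul_sub_one {m k n : ℕ} (hn : n ≤ k * (m - 1) / m) :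
    n * m ≤ (m - 1) * k :=
  calc n * m ≤ k * (m - 1) / m * m := Nat.mul_le_mul_right m hn
    _ ≤ k * (m - 1) := Nat.div_mul_le_self _ _
    _ = (m - 1) * k := Nat.mul_comm _ _

lemma succ_mul_sub_one_div_le (m k : ℕ) : (k + 1) * (m - 1) / m ≤ k := by
  rcases Nat.eq_zero_or_pos m with rfl | hm
  · simp
  · refine Nat.lt_succ_iff.1 ((Nat.div_lt_iff_lt_mul hm).2 ?_)
    exact Nat.mul_lt_mul_of_pos_left (by omega) (Nat.succ_pos k)

lemma succ_mul_sub_one_div_le_add_one (m k : ℕ) :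
    (k + 1) * (m - 1) / m ≤ k * (m - 1) / m + 1 := by
  rcases Nat.eq_zero_or_pos m with rfl | hm
  · simp
  · calc (k + 1) * (m - 1) / m ≤ (k * (m - 1) + m) / m :=
          Nat.div_le_div_right (by rw [add_mul, one_mul]; omega)
      _ = k * (m - 1) / m + 1 := Nat.add_div_right _ hm

lemma one_le_mul_sub_one_div {m k : ℕ} (hm : 2 ≤ m) (hk : 2 ≤ k) : 1 ≤ k * (m - 1) / m :=
  (Nat.le_div_iff_mul_le (by omega)).2 <| by
    calc 1 * m ≤ 2 * (m - 1) := by omega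
      _ ≤ k * (m - 1) := Nat.mul_le_mul_right _ hk

section StrideSum

variable {R : Type*} [Semiring R]

noncomputable def strideSum (m k : ℕ) (a : ℕ → R) : R[X] :=
  ∑ n ∈ range (k * (m - 1) / m + 1), C (a n) * X ^ ((m - 1) * k - n * m)

lemma coeff_strideSum {m k n : ℕ} (hm : 0 < m) (a : ℕ → R) (hn : n ≤ k * (m - 1) / m) :
    (strideSum m k a).coeff ((m - 1) * k - n * m) = a n := by
  rw [strideSum, finsetSum_coeff, sum_eq_single_of_mem n (mem_range.2 (by omega)),
    coeff_C_mul_X_pow, if_pos rfl]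
  intro i hi hin
  have hnm := mul_le_of_le_div_mul_sub_one hn
  have him := mul_le_of_le_div_mul_sub_one (Nat.lt_succ_iff.1 (mem_range.1 hi))
  rw [coeff_C_mul_X_pow, if_neg]
  exact fun h => hin (Nat.eq_of_mul_eq_mul_right hm (by omega))

lemma coeff_strideSum_of_lt {m k d : ℕ} (a : ℕ → R) (hd : (m - 1) * k < d) :
    (strideSum m k a).coeff d = 0 := by
  rw [strideSum, finsetSum_coeff]
  exact sum_eq_zero fun i _ => by rw [coeff_C_mul_X_pow, if_neg (by omega)]

lemma coeff_X_pow_mul_strideSum {m k n : ℕ} (hm : 0 < m) (a : ℕ → R)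
    (hn : n ≤ (k + 1) * (m - 1) / m) :
    (X ^ (m - 1) * strideSum m k a).coeff ((m - 1) * (k + 1) - n * m) =
      if n ≤ k * (m - 1) / m then a n else 0 := by
  have hexp : (m - 1) * (k + 1) = (m - 1) * k + (m - 1) := mul_add_one _ _
  have hnm := mul_le_of_le_div_mul_sub_one hn
  rw [coeff_X_pow_mul']
  by_cases hnk : n ≤ k * (m - 1) / m
  · have hnkm := mul_le_of_le_div_mul_sub_one hnk
    rw [if_pos (by omega), if_pos hnk, ← coeff_strideSum hm a hnk]
    congr 1
    omega
  · have hlt : (m - 1) * k < n * m := by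
      rw [Nat.mul_comm]; exact lt_of_not_ge ((Nat.le_div_iff_mul_le hm).not.1 hnk)
    rw [if_neg (by omega), if_neg hnk]

lemma coeff_derivative_strideSum {m k n : ℕ} (hm : 0 < m) (a : ℕ → R)
    (hn : n ≤ (k + 1) * (m - 1) / m) :
    (derivative (strideSum m k a)).coeff ((m - 1) * (k + 1) - n * m) =
      if 1 ≤ n then a (n - 1) * ((m - 1) * k - (n - 1) * m : ℕ) else 0 := by
  have hexp : (m - 1) * (k + 1) = (m - 1) * k + (m - 1) := mul_add_one _ _
  rw [coeff_derivative]
  rcases n with _ | j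
  · rw [coeff_strideSum_of_lt a (by omega), zero_mul, if_neg (by omega)]
  · have hj : j ≤ k * (m - 1) / m := by
      have := succ_mul_sub_one_div_le_add_one m k; omega
    have hjm := mul_le_of_le_div_mul_sub_one hn
    have hdeg : (m - 1) * (k + 1) - (j + 1) * m + 1 = (m - 1) * k - j * m := by
      rw [add_one_mul] at hjm ⊢; omega
    rw [if_pos (by omega), Nat.add_sub_cancel, ← Nat.cast_add_one, hdeg, coeff_strideSum hm a hj]

end StrideSum

theorem coefficient_succ_eq {m : ℕ} (hm : 0 < m) {lam : ℂ} (hlam : lam ≠ 0)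
    {p : ℕ → ℂ[X]} (hprec : ∀ k, p (k + 1) = C lam * X ^ (m - 1) * p k + derivative (p k))
    {c : ℕ → ℕ → ℕ}
    (hC : ∀ k : ℕ, 1 ≤ k → p k = strideSum m k fun n => lam ^ (k - n) * (c k n : ℂ))
    {k : ℕ} (hk : 1 ≤ k) {n : ℕ} (hn : n ≤ (k + 1) * (m - 1) / m) :
    c (k + 1) n = (if n ≤ k * (m - 1) / m then c k n else 0) +
      (if 1 ≤ n then ((m - 1) * k - (n - 1) * m) * c k (n - 1) else 0) := by
  have hnk : n ≤ k := hn.trans (succ_mul_sub_one_div_le m k)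
  have hcoeff := congrArg (coeff · ((m - 1) * (k + 1) - n * m)) (hprec k)
  simp only [coeff_add, mul_assoc, coeff_C_mul] at hcoeff
  rw [hC (k + 1) (by omega), coeff_strideSum hm _ hn, hC k hk,
    coeff_X_pow_mul_strideSum hm _ hn, coeff_derivative_strideSum hm _ hn] at hcoeff
  have hpow : lam ^ (k + 1 - n) ≠ 0 := pow_ne_zero _ hlam
  apply Nat.cast_injective (R := ℂ)
  apply mul_left_cancel₀ hpow
  rw [hcoeff]
  push_cast [apply_ite (Nat.cast : ℕ → ℂ)]
  split_ifs with h1 h2 h2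
  · rw [show k + 1 - n = k - n + 1 by omega, show k - (n - 1) = k - n + 1 by omega]; ring
  · rw [show k + 1 - n = k - n + 1 by omega]; ring
  · rw [show k - (n - 1) = k + 1 - n by omega]; ring
  · ring

theorem coefficient_succ_le_mul_sq {m : ℕ} {c : ℕ → ℕ → ℕ}
    (hrec : ∀ k, 1 ≤ k → ∀ n ≤ (k + 1) * (m - 1) / m,
      c (k + 1) n = (if n ≤ k * (m - 1) / m then c k n else 0) +
        (if 1 ≤ n then ((m - 1) * k - (n - 1) * m) * c k (n - 1) else 0))
    {k : ℕ} (hk : 1 ≤ k) :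
    ∀ n, n + 1 ≤ k * (m - 1) / m → c k (n + 1) ≤ m * k ^ 2 * c k n := by
  induction k, hk using Nat.le_induction with
  | base =>
    intro n hn
    rcases Nat.eq_zero_or_pos m with rfl | hm
    · simp at hn
    · rw [one_mul, Nat.div_eq_of_lt (by omega)] at hn; omega
  | succ k hk ih =>
    intro n hn
    have hnk : n ≤ k * (m - 1) / m := by
      have := succ_mul_sub_one_div_le_add_one m k; omega
    have hmono : c k n ≤ c (k + 1) n := by
      rw [hrec k hk n (by omega), if_pos hnk]; exact Nat.le_add_right _ _
    have hstep := hrec k hk (n + 1) hn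
    rw [if_pos (Nat.le_add_left 1 n), Nat.add_sub_cancel] at hstep
    have hfirst : (if n + 1 ≤ k * (m - 1) / m then c k (n + 1) else 0) ≤ m * k ^ 2 * c k n := by
      split_ifs with h
      · exact ih n h
      · exact Nat.zero_le _
    have hweight : (m - 1) * k - n * m ≤ m * k :=
      (Nat.sub_le _ _).trans (Nat.mul_le_mul_right k (Nat.sub_le m 1))
    calc c (k + 1) (n + 1) ≤ m * k ^ 2 * c k n + m * k * c k n := by
          rw [hstep]; exact Nat.add_le_add hfirst (Nat.mul_le_mul_right _ hweight)
      _ ≤ m * (k + 1) ^ 2 * c k n := by nlinarith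
      _ ≤ m * (k + 1) ^ 2 * c (k + 1) n := Nat.mul_le_mul_left _ hmono

lemma sq_le_rpow_of_two_le {x y : ℝ} (hx : 1 ≤ x) (hy : 2 ≤ y) : x ^ 2 ≤ x ^ y := by
  rw [← Real.rpow_natCast x 2]
  exact Real.rpow_le_rpow_of_exponent_le hx (by exact_mod_cast hy)

theorem coefficient_recursive_bound_general (m : ℕ) (hm : 2 ≤ m) (lam : ℂ) (hlam : lam ≠ 0)
    (p : ℕ → Polynomial ℂ)
    (hprec : ∀ k, p (k + 1) =
      Polynomial.C lam * Polynomial.X ^ (m - 1) * p k + Polynomial.derivative (p k))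
    (C : ℕ → ℕ → ℕ)
    (hC : ∀ k : ℕ, 1 ≤ k →
      p k = ∑ n ∈ Finset.range (k * (m - 1) / m + 1),
        Polynomial.C (lam ^ (k - n) * (C k n : ℂ)) * Polynomial.X ^ ((m - 1) * k - n * m)) :
    ∀ θ : ℝ, 2 / (m : ℝ) ≤ θ →
      ∀ k : ℕ, 2 ≤ k → ∀ n : ℕ, n ≤ k * (m - 1) / m - 1 →
        (C k (n + 1) : ℝ) ≤ (C k n : ℝ) * (m : ℝ) * (k : ℝ) ^ ((m : ℝ) * θ) := by
  intro θ hθ k hk n hn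
  have hrec := fun k hk n hn => coefficient_succ_eq (by omega) hlam hprec hC (k := k) hk (n := n) hn
  have hbound := coefficient_succ_le_mul_sq hrec (k := k) (by omega) n
    (by have := one_le_mul_sub_one_div hm hk; omega)
  have hmθ : 2 ≤ (m : ℝ) * θ := by
    have hm0 : (0 : ℝ) < m := by positivity
    rwa [div_le_iff₀' hm0] at hθ
  calc (C k (n + 1) : ℝ) ≤ C k n * m * (k : ℝ) ^ 2 := by
        have : (C k (n + 1) : ℝ) ≤ m * k ^ 2 * C k n := by exact_mod_cast hbound
        linarith
    _ ≤ C k n * m * (k : ℝ) ^ ((m : ℝ) * θ) := by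
        gcongr; exact sq_le_rpow_of_two_le (by exact_mod_cast (by omega : 1 ≤ k)) hmθ

theorem coefficient_recursive_bound (m : ℕ) (hm : 2 ≤ m) (lam : ℂ) (hlam : lam ≠ 0)
    (p : ℕ → Polynomial ℂ) (hp0 : p 0 = 1)
    (hprec : ∀ k, p (k + 1) =
      Polynomial.C lam * Polynomial.X ^ (m - 1) * p k + Polynomial.derivative (p k))
    (C : ℕ → ℕ → ℕ)
    (hC : ∀ k : ℕ, 1 ≤ k →
      p k = ∑ n ∈ Finset.range (k * (m - 1) / m + 1),
        Polynomial.C (lam ^ (k - n) * (C k n : ℂ)) * Polynomial.X ^ ((m - 1) * k - n * m)) :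
    ∀ θ : ℝ, 2 / (m : ℝ) ≤ θ →
      ∀ k : ℕ, 2 ≤ k → ∀ n : ℕ, n ≤ k * (m - 1) / m - 1 →
        (C k (n + 1) : ℝ) ≤ (C k n : ℝ) * (m : ℝ) * (k : ℝ) ^ ((m : ℝ) * θ) :=
  coefficient_recursive_bound_general m hm lam hlam p hprec C hC
end

section
/- Let m ≥ 2 be an integer and let C_{k,n} be the coefficients of the polynomials from differentiating e^{λ x^m/m}. Then for every k ≥ 4, C_{k,2} ≤ m² k⁴ / 2. -/
/-!
Write `M = m - 1`. Comparing the coefficients of `X ^ (M (k + 1) - (n + 1) m)` in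
`p (k + 1) = λ X^M p k + p k'` gives `C (k+1) (n+1) = C k (n+1) + (M k - n m) C k n`, where the
first term is absent when `(n + 1) m > M k`; together with `C k 0 = 1` this yields
`n! C k n ≤ (m k²)^n` by induction on `n` and then `k`, the step being
`k^(2n+2) + (n+1) k^(2n+1) ≤ (k+1)^(2n+2)`. For `k ≥ 4` the case `n = 2` applies.
-/

open Polynomial
open scoped Nat

namespace Polynomial

variable {R : Type*} [CommSemiring R]

theorem coeff_sum_C_mul_X_pow_of_injOn {ι : Type*} {s : Finset ι} {a : ι → R} {e : ι → ℕ}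
    (he : Set.InjOn e s) {i : ι} (hi : i ∈ s) :
    (∑ j ∈ s, C (a j) * X ^ e j).coeff (e i) = a i := by
  rw [finsetSum_coeff, Finset.sum_eq_single_of_mem i hi, coeff_C_mul_X_pow, if_pos rfl]
  intro j hj hji
  rw [coeff_C_mul_X_pow, if_neg fun h ↦ hji (he hj hi h.symm)]

theorem coeff_C_mul_X_pow_mul_add_derivative (a : R) (M e : ℕ) (q : R[X]) :
    (C a * X ^ M * q + derivative q).coeff e =
      (if M ≤ e then a * q.coeff (e - M) else 0) + q.coeff (e + 1) * (e + 1) := by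
  rw [coeff_add, mul_assoc, coeff_C_mul, coeff_X_pow_mul', coeff_derivative]
  split_ifs <;> simp

end Polynomial

theorem pow_succ_add_mul_pow_le (k N : ℕ) :
    k ^ (N + 1) + (N + 1) * k ^ N ≤ (k + 1) ^ (N + 1) := by
  induction N with
  | zero => simp
  | succ N ih =>
    calc k ^ (N + 2) + (N + 2) * k ^ (N + 1)
        ≤ (k ^ (N + 1) + (N + 1) * k ^ N) * (k + 1) := by
          ring_nf; nlinarith [Nat.zero_le (k ^ N)]
      _ ≤ (k + 1) ^ (N + 2) := by rw [pow_succ (k + 1) (N + 1)]; gcongr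

/-- The expansion of `p k` from the statement, written with `M = m - 1`. -/
def HasExpansionCoeffs (M : ℕ) (lam : ℂ) (p : ℕ → ℂ[X]) (C : ℕ → ℕ → ℕ) : Prop :=
  ∀ k : ℕ, 1 ≤ k → p k = ∑ n ∈ Finset.range (k * M / (M + 1) + 1),
    Polynomial.C (lam ^ (k - n) * (C k n : ℂ)) * X ^ (M * k - n * (M + 1))

namespace HasExpansionCoeffs

variable {M : ℕ} {lam : ℂ} {p : ℕ → ℂ[X]} {C : ℕ → ℕ → ℕ}

theorem coeff_eq (hC : HasExpansionCoeffs M lam p C) {k n d : ℕ} (hk : 1 ≤ k)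
    (hd : d + n * (M + 1) = M * k) : (p k).coeff d = lam ^ (k - n) * C k n := by
  have mem_range : ∀ {i}, i ∈ Finset.range (k * M / (M + 1) + 1) ↔ i * (M + 1) ≤ M * k := by
    intro i
    rw [Finset.mem_range, Nat.lt_succ_iff, Nat.le_div_iff_mul_le M.add_one_pos, mul_comm k]
  have hinj : Set.InjOn (fun i ↦ M * k - i * (M + 1)) (Finset.range (k * M / (M + 1) + 1)) := by
    intro i hi j hj hij
    have := mem_range.1 hi
    have := mem_range.1 hj
    exact Nat.eq_of_mul_eq_mul_right M.add_one_pos (by simp only at hij; omega)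
  obtain rfl : d = M * k - n * (M + 1) := by omega
  rw [hC k hk]
  exact coeff_sum_C_mul_X_pow_of_injOn hinj (mem_range.2 (by omega))

theorem coeff_eq_zero_of_lt (hC : HasExpansionCoeffs M lam p C) {k d : ℕ} (hk : 1 ≤ k)
    (hd : M * k < d) : (p k).coeff d = 0 := by
  refine coeff_eq_zero_of_natDegree_lt (lt_of_le_of_lt ?_ hd)
  rw [hC k hk]
  exact natDegree_sum_le_of_forall_le _ _ fun n _ ↦
    (natDegree_C_mul_X_pow_le _ _).trans (Nat.sub_le _ _)

theorem C_zero (hC : HasExpansionCoeffs M lam p C) (hlam : lam ≠ 0) (hp0 : p 0 = 1)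
    (hprec : ∀ k, p (k + 1) = Polynomial.C lam * X ^ M * p k + derivative (p k))
    {k : ℕ} (hk : 1 ≤ k) : C k 0 = 1 := by
  induction k, hk using Nat.le_induction with
  | base =>
    have h := hC.coeff_eq (n := 0) (d := M) le_rfl (by simp)
    rw [hprec, hp0, mul_one, derivative_one, add_zero, coeff_C_mul_X_pow, if_pos rfl,
      pow_one] at h
    exact_mod_cast (mul_eq_left₀ hlam).1 h.symm
  | succ k hk ih =>
    have h := hC.coeff_eq (k := k + 1) (n := 0) (d := M * (k + 1)) (by omega) (by simp)
    rw [hprec, coeff_C_mul_X_pow_mul_add_derivative, if_pos (by rw [mul_add_one]; omega),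
      show M * (k + 1) - M = M * k by rw [mul_add_one]; omega,
      hC.coeff_eq hk (n := 0) (by simp), hC.coeff_eq_zero_of_lt hk (by rw [mul_add_one]; omega),
      ih] at h
    rw [Nat.sub_zero, Nat.sub_zero, zero_mul, add_zero, Nat.cast_one, mul_one, ← pow_succ'] at h
    exact_mod_cast (mul_eq_left₀ (pow_ne_zero _ hlam)).1 h.symm

/- When `(n + 1) * (M + 1) > M * k`, the index `n + 1` lies outside the expansion of `p k`,
so `C k (n + 1)` is unconstrained there; hence the `if`. -/
theorem C_succ_succ (hC : HasExpansionCoeffs M lam p C) (hlam : lam ≠ 0)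
    (hprec : ∀ k, p (k + 1) = Polynomial.C lam * X ^ M * p k + derivative (p k))
    {k n : ℕ} (hk : 1 ≤ k) (h : (n + 1) * (M + 1) ≤ M * (k + 1)) :
    C (k + 1) (n + 1) =
      (if (n + 1) * (M + 1) ≤ M * k then C k (n + 1) else 0) + (M * k - n * (M + 1)) * C k n := by
  have hMk := mul_add_one M k
  have hnM := add_one_mul n (M + 1)
  obtain ⟨e, he⟩ : ∃ e, e + (n + 1) * (M + 1) = M * (k + 1) := ⟨_, Nat.sub_add_cancel h⟩
  have hnk : n + 1 ≤ k := by
    by_contra! hlt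
    nlinarith [Nat.mul_le_mul_right (M + 1) hlt]
  have hshift : (if M ≤ e then lam * (p k).coeff (e - M) else 0) =
      lam ^ (k - n) * ((if (n + 1) * (M + 1) ≤ M * k then C k (n + 1) else 0 : ℕ) : ℂ) := by
    split_ifs with h1 h2 h2
    · rw [hC.coeff_eq hk (by omega : e - M + (n + 1) * (M + 1) = M * k),
        show k - n = k - (n + 1) + 1 by omega]
      ring
    · omega
    · omega
    · simp
  have hder : (p k).coeff (e + 1) * (e + 1) =
      lam ^ (k - n) * (((M * k - n * (M + 1)) * C k n : ℕ) : ℂ) := by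
    rw [hC.coeff_eq hk (by omega : e + 1 + n * (M + 1) = M * k),
      show M * k - n * (M + 1) = e + 1 by omega]
    push_cast
    ring
  have key := hC.coeff_eq (k := k + 1) (n := n + 1) (by omega) he
  rw [hprec, coeff_C_mul_X_pow_mul_add_derivative, hshift, hder, Nat.add_sub_add_right,
    ← mul_add] at key
  exact_mod_cast (mul_left_cancel₀ (pow_ne_zero _ hlam) key).symm

theorem factorial_mul_C_le (hC : HasExpansionCoeffs M lam p C) (hlam : lam ≠ 0) (hp0 : p 0 = 1)
    (hprec : ∀ k, p (k + 1) = Polynomial.C lam * X ^ M * p k + derivative (p k))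
    {k n : ℕ} (hk : 1 ≤ k) (hn : n * (M + 1) ≤ M * k) :
    n ! * C k n ≤ ((M + 1) * k ^ 2) ^ n := by
  induction n generalizing k with
  | zero => simp [hC.C_zero hlam hp0 hprec hk]
  | succ n ihn =>
    induction k, hk using Nat.le_induction with
    | base => nlinarith
    | succ k hk ihk =>
      have hnM := add_one_mul n (M + 1)
      have hMk := mul_add_one M k
      have hold : (n + 1)! * (if (n + 1) * (M + 1) ≤ M * k then C k (n + 1) else 0) ≤
          ((M + 1) * k ^ 2) ^ (n + 1) := by
        split_ifs with hle
        · exact ihk hle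
        · simp
      have hnew : (n + 1)! * ((M * k - n * (M + 1)) * C k n) ≤
          (n + 1) * ((M + 1) * k) * ((M + 1) * k ^ 2) ^ n := by
        calc (n + 1)! * ((M * k - n * (M + 1)) * C k n)
            = (n + 1) * (M * k - n * (M + 1)) * (n ! * C k n) := by
              rw [Nat.factorial_succ]; ring
          _ ≤ (n + 1) * ((M + 1) * k) * ((M + 1) * k ^ 2) ^ n := by
              gcongr
              · exact (Nat.sub_le _ _).trans (Nat.mul_le_mul_right k M.le_succ)
              · exact ihn hk (by omega)
      rw [hC.C_succ_succ hlam hprec hk hn, mul_add]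
      calc _ ≤ ((M + 1) * k ^ 2) ^ (n + 1) + (n + 1) * ((M + 1) * k) * ((M + 1) * k ^ 2) ^ n :=
            add_le_add hold hnew
        _ = (M + 1) ^ (n + 1) * (k ^ (2 * n + 1 + 1) + (n + 1) * k ^ (2 * n + 1)) := by
            simp only [mul_pow, ← pow_mul]; ring
        _ ≤ (M + 1) ^ (n + 1) * (k ^ (2 * n + 1 + 1) + (2 * n + 1 + 1) * k ^ (2 * n + 1)) := by
            gcongr; omega
        _ ≤ (M + 1) ^ (n + 1) * (k + 1) ^ (2 * n + 1 + 1) := by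
            gcongr; exact pow_succ_add_mul_pow_le k (2 * n + 1)
        _ = ((M + 1) * (k + 1) ^ 2) ^ (n + 1) := by rw [mul_pow, ← pow_mul]; ring

end HasExpansionCoeffs

theorem coefficient_two_bound (m : ℕ) (hm : 2 ≤ m) (lam : ℂ) (hlam : lam ≠ 0)
    (p : ℕ → Polynomial ℂ) (hp0 : p 0 = 1)
    (hprec : ∀ k, p (k + 1) =
      Polynomial.C lam * Polynomial.X ^ (m - 1) * p k + Polynomial.derivative (p k))
    (C : ℕ → ℕ → ℕ)
    (hC : ∀ k : ℕ, 1 ≤ k →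
      p k = ∑ n ∈ Finset.range (k * (m - 1) / m + 1),
        Polynomial.C (lam ^ (k - n) * (C k n : ℂ)) * Polynomial.X ^ ((m - 1) * k - n * m)) :
    ∀ k : ℕ, 4 ≤ k → (C k 2 : ℝ) ≤ (m : ℝ) ^ 2 * (k : ℝ) ^ 4 / 2 := by
  intro k hk
  obtain ⟨M, rfl⟩ : ∃ M, m = M + 1 := ⟨m - 1, by omega⟩
  simp only [Nat.add_sub_cancel] at hprec hC
  have hbound : 2 ! * C k 2 ≤ ((M + 1) * k ^ 2) ^ 2 :=
    HasExpansionCoeffs.factorial_mul_C_le hC hlam hp0 hprec (by omega) (by nlinarith)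
  have hreal : (2 * C k 2 : ℝ) ≤ ((M + 1) * k ^ 2) ^ 2 := by exact_mod_cast hbound
  push_cast
  linarith
end

section
/- Let m ≥ 2, k ≥ 1 be integers and λ ∈ ℂ. Then the k-th derivative of g(x) = e^{λ x^m/m} satisfies the Faà di Bruno expansion g^{(k)}(x)/g(x) = Σ_{n=0}^{k-1} λ^{k-n} x^{(m-1)k - nm} · (k!/(m^{k-n}(k-n)!)) · Σ_{k_1+⋯+k_{k-n}=k, 1≤k_ℓ≤m} ∏_{ℓ=1}^{k-n} m!/((m-k_ℓ)! k_ℓ!). -/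
/-!
Write `g = exp ∘ q` with `q = μ X ^ m`, `μ = λ / m`. Then `g⁽ᵏ⁾ = P_k · g` for the polynomials
`P_0 = 1`, `P_{k+1} = P_k' + q' P_k`. After multiplication by `X ^ k` this recursion preserves
polynomials in `X ^ m`: `X ^ k P_k = A_k (X ^ m)` with `A_0 = 1` and
`A_{k+1} = m X A_k' + (μ m X - k) A_k`. With `F = (1 + X) ^ m - 1`, the coefficients
`μ ^ j k! / j! [X ^ k] F ^ j` satisfy the same recursion, because `(1 + X) F' = m (F + 1)`;
and `[X ^ k] F ^ j` is the inner sum over compositions of `k`, since `[X ^ a] F = C(m, a)` for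
`1 ≤ a ≤ m` and `0` otherwise.
-/

open scoped Classical

open Polynomial Finset
open scoped Nat

theorem Finset.Nat.sum_antidiagonalTuple_succ {M : Type*} [AddCommMonoid M] (j k : ℕ)
    (f : (Fin (j + 1) → ℕ) → M) :
    ∑ t ∈ Nat.antidiagonalTuple (j + 1) k, f t =
      ∑ p ∈ antidiagonal k, ∑ s ∈ Nat.antidiagonalTuple j p.2, f (Fin.cons p.1 s) := by
  -- `antidiagonalTuple (j + 1) k` is defined by exactly this recursion, on lists
  change (Multiset.map f (List.Nat.antidiagonalTuple (j + 1) k : Multiset (Fin (j + 1) → ℕ))).sum =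
    (Multiset.map _ (List.Nat.antidiagonal k : Multiset (ℕ × ℕ))).sum
  simp only [List.Nat.antidiagonalTuple, Multiset.map_coe, Multiset.sum_coe, List.flatMap_def,
    List.map_flatten, List.sum_flatten, List.map_map]
  congr 1
  refine List.map_congr_left fun p _ => ?_
  simp only [Function.comp_apply, List.map_map]
  rfl

namespace Polynomial

section CommSemiring

variable {R : Type*} [CommSemiring R]

theorem coeff_pow_eq_sum_antidiagonalTuple (p : R[X]) (j k : ℕ) :
    (p ^ j).coeff k = ∑ t ∈ Finset.Nat.antidiagonalTuple j k, ∏ ℓ, p.coeff (t ℓ) := by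
  induction j generalizing k with
  | zero => cases k <;> simp [coeff_one]
  | succ j ih =>
    rw [pow_succ', coeff_mul, Finset.Nat.sum_antidiagonalTuple_succ]
    simp only [ih, mul_sum, Fin.prod_univ_succ, Fin.cons_zero, Fin.cons_succ]

theorem coeff_X_mul_derivative (p : R[X]) (k : ℕ) :
    (X * derivative p).coeff k = k * p.coeff k := by
  cases k with
  | zero => simp
  | succ k => rw [coeff_X_mul, coeff_derivative, mul_comm]; push_cast; ring

theorem X_mul_derivative_C_mul_X_pow (a : R) (n : ℕ) :
    X * derivative (C a * X ^ n) = C (a * n) * X ^ n := by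
  cases n with
  | zero => simp
  | succ n => rw [derivative_C_mul_X_pow, pow_succ', add_tsub_cancel_right]; ring

theorem X_mul_derivative_expand (m : ℕ) (p : R[X]) :
    X * derivative (expand R m p) = expand R m (C (m : R) * (X * derivative p)) := by
  rw [derivative_expand]
  cases m with
  | zero => simp
  | succ m => simp only [map_mul, map_natCast, expand_X, add_tsub_cancel_right]; ring

end CommSemiring

section CommRing

variable {R : Type*} [CommRing R]

theorem coeff_one_add_X_pow_sub_one (m a : ℕ) :
    ((1 + X) ^ m - 1 : R[X]).coeff a =
      if 1 ≤ a ∧ a ≤ m then (m ! / ((m - a)! * a !) : ℕ) else 0 := by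
  rw [coeff_sub, coeff_one_add_X_pow]
  cases a with
  | zero => simp
  | succ a =>
    rw [coeff_one, if_neg (by omega), sub_zero]
    split_ifs with h
    · rw [Nat.choose_eq_factorial_div_factorial h.2, mul_comm]
    · rw [Nat.choose_eq_zero_of_lt (by omega), Nat.cast_zero]

theorem coeff_one_add_X_pow_sub_one_pow (m j k : ℕ) :
    (((1 + X) ^ m - 1 : R[X]) ^ j).coeff k =
      ((∑ t ∈ (Finset.Nat.antidiagonalTuple j k).filter (fun t => ∀ ℓ, 1 ≤ t ℓ ∧ t ℓ ≤ m),
        ∏ ℓ, m ! / ((m - t ℓ)! * (t ℓ)!) : ℕ) : R) := by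
  simp only [coeff_pow_eq_sum_antidiagonalTuple, coeff_one_add_X_pow_sub_one]
  rw [sum_filter]
  push_cast
  simp_rw [prod_ite_zero]
  simp

theorem coeff_one_add_X_pow_sub_one_pow_of_lt (m : ℕ) {j k : ℕ} (h : k < j) :
    (((1 + X) ^ m - 1 : R[X]) ^ j).coeff k = 0 := by
  have hX : (X : R[X]) ∣ (1 + X) ^ m - 1 := by
    rw [X_dvd_iff, coeff_one_add_X_pow_sub_one]; simp
  exact X_pow_dvd_iff.mp (pow_dvd_pow_of_dvd hX j) k h

theorem coeff_one_add_X_pow_sub_one_pow_of_mul_lt (m : ℕ) {j k : ℕ} (h : j * m < k) :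
    (((1 + X) ^ m - 1 : R[X]) ^ j).coeff k = 0 := by
  refine coeff_eq_zero_of_natDegree_lt (lt_of_le_of_lt (natDegree_pow_le_of_le j ?_) h)
  refine natDegree_le_iff_coeff_eq_zero.mpr fun a ha => ?_
  rw [coeff_one_add_X_pow_sub_one, if_neg (by omega), Nat.cast_zero]

theorem one_add_X_mul_derivative_one_add_X_pow_sub_one (m : ℕ) :
    (1 + X) * derivative ((1 + X) ^ m - 1 : R[X]) = C (m : R) * (((1 + X) ^ m - 1) + 1) := by
  cases m with
  | zero => simp
  | succ m =>
    simp only [derivative_sub, derivative_one, sub_zero, derivative_pow, derivative_add,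
      derivative_X, zero_add, mul_one, sub_add_cancel, add_tsub_cancel_right]
    ring

theorem coeff_pow_succ_rec_of_one_add_X_mul_derivative {F : R[X]} {a : R}
    (hF : (1 + X) * derivative F = C a * (F + 1)) (j k : ℕ) :
    (k + 1) * (F ^ (j + 1)).coeff (k + 1) + k * (F ^ (j + 1)).coeff k =
      (j + 1) * a * ((F ^ (j + 1)).coeff k + (F ^ j).coeff k) := by
  have hpow : (1 + X) * derivative (F ^ (j + 1)) = C ((j + 1) * a) * (F ^ (j + 1) + F ^ j) := by
    rw [derivative_pow, ← mul_assoc, mul_comm (1 + X), mul_assoc, mul_assoc, hF]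
    simp only [map_mul, map_add, map_natCast, map_one, Nat.cast_add, Nat.cast_one,
      add_tsub_cancel_right]
    ring
  have h := congrArg (coeff · k) hpow
  simp only [add_mul, one_mul, coeff_add, coeff_derivative, coeff_X_mul_derivative, coeff_C_mul]
    at h
  linear_combination h

end CommRing

end Polynomial

section DerivPoly

variable {R : Type*}

noncomputable def expDerivPoly [CommSemiring R] (q : R[X]) : ℕ → R[X]
  | 0 => 1
  | k + 1 => derivative (expDerivPoly q k) + derivative q * expDerivPoly q k

theorem iteratedDeriv_cexp_eval (q : ℂ[X]) (k : ℕ) :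
    iteratedDeriv k (fun y : ℝ => Complex.exp (q.eval (y : ℂ))) =
      fun x : ℝ => (expDerivPoly q k).eval (x : ℂ) * Complex.exp (q.eval (x : ℂ)) := by
  induction k with
  | zero => ext x; simp [expDerivPoly]
  | succ k ih =>
    ext x
    have hP := ((expDerivPoly q k).hasDerivAt (x : ℂ)).comp_ofReal
    have hq := (q.hasDerivAt (x : ℂ)).cexp.comp_ofReal
    rw [iteratedDeriv_succ, ih, (hP.fun_mul hq).deriv, expDerivPoly, eval_add, eval_mul]
    ring

theorem X_pow_succ_mul_expDerivPoly_succ [CommRing R] (q : R[X]) (k : ℕ) :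
    X ^ (k + 1) * expDerivPoly q (k + 1) =
      X * derivative (X ^ k * expDerivPoly q k) +
        (X * derivative q - C (k : R)) * (X ^ k * expDerivPoly q k) := by
  have hX : X * derivative (X ^ k : R[X]) = C (k : R) * X ^ k := by
    simpa using X_mul_derivative_C_mul_X_pow (1 : R) k
  rw [expDerivPoly, derivative_mul]
  linear_combination -expDerivPoly q k * hX

noncomputable def faaDiBrunoPoly [CommRing R] (m : ℕ) (μ : R) : ℕ → R[X]
  | 0 => 1
  | k + 1 => C (m : R) * (X * derivative (faaDiBrunoPoly m μ k)) +
      (C (μ * m) * X - C (k : R)) * faaDiBrunoPoly m μ k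

theorem X_pow_mul_expDerivPoly_C_mul_X_pow [CommRing R] (m : ℕ) (μ : R) (k : ℕ) :
    X ^ k * expDerivPoly (C μ * X ^ m) k = expand R m (faaDiBrunoPoly m μ k) := by
  induction k with
  | zero => simp [expDerivPoly, faaDiBrunoPoly]
  | succ k ih =>
    rw [X_pow_succ_mul_expDerivPoly_succ, ih, X_mul_derivative_C_mul_X_pow,
      X_mul_derivative_expand, faaDiBrunoPoly]
    simp only [map_add, map_mul, map_sub, expand_C, expand_X]

theorem coeff_faaDiBrunoPoly {K : Type*} [Field K] [CharZero K] (m : ℕ) (μ : K) (k j : ℕ) :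
    (faaDiBrunoPoly m μ k).coeff j =
      μ ^ j * k ! / j ! * (((1 + X) ^ m - 1 : K[X]) ^ j).coeff k := by
  induction k generalizing j with
  | zero =>
    rcases j with _ | j
    · simp [faaDiBrunoPoly]
    · simp [faaDiBrunoPoly, coeff_one, coeff_one_add_X_pow_sub_one_pow_of_lt]
  | succ k ih =>
    rw [faaDiBrunoPoly]
    cases j with
    | zero => simp [ih, coeff_one, imp_or]
    | succ j =>
      have hrec := coeff_pow_succ_rec_of_one_add_X_mul_derivative
        (one_add_X_mul_derivative_one_add_X_pow_sub_one (R := K) m) j k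
      have hj : (j ! : K) ≠ 0 := Nat.cast_ne_zero.mpr j.factorial_ne_zero
      rw [coeff_add, coeff_C_mul, coeff_X_mul_derivative]
      simp only [sub_mul, coeff_sub, mul_assoc, coeff_C_mul, coeff_X_mul, ih, Nat.factorial_succ]
      push_cast
      field_simp
      linear_combination -(μ ^ (j + 1) * k !) * hrec

end DerivPoly

section CharZero

variable {K : Type*} [Field K] [CharZero K]

theorem natDegree_faaDiBrunoPoly_le (m : ℕ) (μ : K) (k : ℕ) :
    (faaDiBrunoPoly m μ k).natDegree ≤ k :=
  natDegree_le_iff_coeff_eq_zero.mpr fun j hj => by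
    rw [coeff_faaDiBrunoPoly, coeff_one_add_X_pow_sub_one_pow_of_lt m hj, mul_zero]

theorem expDerivPoly_C_mul_X_pow (m : ℕ) (μ : K) (k : ℕ) :
    expDerivPoly (C μ * X ^ m) k =
      ∑ j ∈ range (k + 1),
        C (μ ^ j * k ! / j ! * (((1 + X) ^ m - 1 : K[X]) ^ j).coeff k) * X ^ (j * m - k) := by
  refine mul_left_cancel₀ (pow_ne_zero k X_ne_zero) ?_
  rw [X_pow_mul_expDerivPoly_C_mul_X_pow, as_sum_range_C_mul_X_pow' _
    (Nat.lt_succ_of_le (natDegree_faaDiBrunoPoly_le m μ k)), map_sum, mul_sum]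
  refine sum_congr rfl fun j _ => ?_
  rw [coeff_faaDiBrunoPoly, map_mul, expand_C, map_pow, expand_X, ← pow_mul, mul_comm m j]
  -- the terms with `j * m < k`, where the exponent `j * m - k` is truncated, vanish
  rcases lt_or_ge (j * m) k with h | h
  · simp [coeff_one_add_X_pow_sub_one_pow_of_mul_lt m h]
  · rw [mul_left_comm, ← pow_add, Nat.add_sub_cancel' h]

end CharZero

theorem faa_di_bruno_expansion_general (m k : ℕ) (hk : 1 ≤ k) (lam : ℂ) :
    ∀ x : ℝ,
      iteratedDeriv k (fun y : ℝ => Complex.exp (lam * (y : ℂ) ^ m / m)) x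
        = (∑ n ∈ Finset.range k,
            lam ^ (k - n) * (x : ℂ) ^ ((m - 1) * k - n * m)
              * ((Nat.factorial k : ℂ) / ((m : ℂ) ^ (k - n) * (Nat.factorial (k - n) : ℂ)))
              * ((∑ t ∈ (Finset.Nat.antidiagonalTuple (k - n) k).filter
                    (fun t => ∀ ℓ, 1 ≤ t ℓ ∧ t ℓ ≤ m),
                  ∏ ℓ, Nat.factorial m / (Nat.factorial (m - t ℓ) * Nat.factorial (t ℓ)) : ℕ) : ℂ))
          * Complex.exp (lam * (x : ℂ) ^ m / m) := by
  intro x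
  have hg : (fun y : ℝ => Complex.exp (lam * (y : ℂ) ^ m / m)) =
      fun y : ℝ => Complex.exp ((C (lam / m) * X ^ m).eval (y : ℂ)) := by
    funext y
    rw [eval_mul, eval_C, eval_pow, eval_X, div_mul_eq_mul_div]
  rw [hg, iteratedDeriv_cexp_eval, expDerivPoly_C_mul_X_pow, ← sum_range_reflect, sum_range_succ,
    Nat.add_sub_cancel, Nat.sub_self, pow_zero, pow_zero, coeff_one, if_neg (by omega)]
  simp only [mul_zero, map_zero, zero_mul, add_zero, eval_finsetSum, eval_mul, eval_C, eval_pow,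
    eval_X]
  congr 1
  · refine sum_congr rfl fun n _ => ?_
    have hexp : (k - n) * m - k = (m - 1) * k - n * m := by
      rw [Nat.sub_mul, Nat.sub_one_mul, mul_comm m k, Nat.sub_right_comm]
    rw [coeff_one_add_X_pow_sub_one_pow, hexp, div_pow]
    ring
  · rw [div_mul_eq_mul_div]

theorem faa_di_bruno_expansion (m k : ℕ) (hm : 2 ≤ m) (hk : 1 ≤ k) (lam : ℂ) :
    ∀ x : ℝ,
      iteratedDeriv k (fun y : ℝ => Complex.exp (lam * (y : ℂ) ^ m / m)) x
        = (∑ n ∈ Finset.range k,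
            lam ^ (k - n) * (x : ℂ) ^ ((m - 1) * k - n * m)
              * ((Nat.factorial k : ℂ) / ((m : ℂ) ^ (k - n) * (Nat.factorial (k - n) : ℂ)))
              * ((∑ t ∈ (Finset.Nat.antidiagonalTuple (k - n) k).filter
                    (fun t => ∀ ℓ, 1 ≤ t ℓ ∧ t ℓ ≤ m),
                  ∏ ℓ, Nat.factorial m / (Nat.factorial (m - t ℓ) * Nat.factorial (t ℓ)) : ℕ) : ℂ))
          * Complex.exp (lam * (x : ℂ) ^ m / m) :=
  faa_di_bruno_expansion_general m k hk lam
end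

section
/- Let m ∈ ℕ, m ≥ 2, λ = ±im, θ ≥ 2/m real, and let p_{λ,k} be the polynomials with ∂^k e^{±i x^m} = p_{λ,k}(x) e^{±i x^m}. Then there is a strictly unbounded sequence of positive integers k_j (namely k_j the smallest integer in [4jm/(m-1), (4j+1)m/(m-1)]) such that |p_{λ,k_j}(k_j^θ)| ≥ (1/2) m^{k_j} k_j^{θ k_j (m-1)} for all j ≥ 1. -/
/-!
Write `p n = ∑ t, λ ^ (n - t) c(n, t) X ^ (n (m - 1) - m t)` with `c = derivCoeff`; the
coefficients are natural numbers with `c(n, 0) = 1` and `c(n, t) ≤ ((m - 1) * C(n, 2)) ^ t`.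
At `x = k ^ θ` we have `x ^ m ≥ k ^ 2`, so after factoring out `λ ^ k x ^ (k (m - 1))` the `t`-th
term has modulus at most `2 ^ (-t)`. As `λ⁻¹` is purely imaginary, the term `t = 1` does not
contribute to the real part, while the terms with `t ≥ 2` add up to less than `1 / 2`; so the real
part, hence the modulus, of the normalised sum is at least `1 / 2`, for every `k`.
-/

open Polynomial Finset

/-- The truncated subtraction is harmless: `derivCoeff m n t = 0` once `n * (m - 1) < m * t`. -/
def derivCoeff (m : ℕ) : ℕ → ℕ → ℕ
  | _, 0 => 1
  | 0, _ + 1 => 0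
  | n + 1, t + 1 => derivCoeff m n (t + 1) + (n * (m - 1) - m * t) * derivCoeff m n t

section derivCoeff

variable {m : ℕ}

@[simp]
lemma derivCoeff_zero_right (n : ℕ) : derivCoeff m n 0 = 1 := by
  cases n <;> rfl

lemma derivCoeff_succ_succ (n t : ℕ) :
    derivCoeff m (n + 1) (t + 1) =
      derivCoeff m n (t + 1) + (n * (m - 1) - m * t) * derivCoeff m n t := rfl

lemma derivCoeff_eq_zero_of_lt {n t : ℕ} (h : n * (m - 1) < m * t) : derivCoeff m n t = 0 := by
  induction n generalizing t with
  | zero =>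
    cases t with
    | zero => simp at h
    | succ t => rfl
  | succ n ih =>
    cases t with
    | zero => simp at h
    | succ t =>
      rw [Nat.succ_mul, mul_add_one] at h
      simp [derivCoeff_succ_succ, ih (t := t + 1) (by rw [mul_add_one]; omega),
        Nat.sub_eq_zero_of_le (by omega : n * (m - 1) ≤ m * t)]

lemma derivCoeff_eq_zero_of_lt_right (hm : 1 ≤ m) {n t : ℕ} (h : n < t) :
    derivCoeff m n t = 0 := by
  apply derivCoeff_eq_zero_of_lt
  calc n * (m - 1) ≤ n * m := Nat.mul_le_mul_left n (Nat.sub_le m 1)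
    _ < m * t := by rw [mul_comm]; exact Nat.mul_lt_mul_of_pos_left h hm

lemma derivCoeff_le_pow (n t : ℕ) : derivCoeff m n t ≤ ((m - 1) * n.choose 2) ^ t := by
  induction n generalizing t with
  | zero => cases t <;> simp [derivCoeff]
  | succ n ih =>
    cases t with
    | zero => simp
    | succ t =>
      set A := (m - 1) * n.choose 2
      have hA : (m - 1) * (n + 1).choose 2 = A + n * (m - 1) := by
        rw [Nat.choose_succ_succ', Nat.choose_one_right]; ring
      calc derivCoeff m (n + 1) (t + 1)
          ≤ A ^ (t + 1) + n * (m - 1) * A ^ t :=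
            add_le_add (ih _) (Nat.mul_le_mul (Nat.sub_le _ _) (ih t))
        _ = (A + n * (m - 1)) * A ^ t := by ring
        _ ≤ (A + n * (m - 1)) * (A + n * (m - 1)) ^ t := by gcongr; omega
        _ = ((m - 1) * (n + 1).choose 2) ^ (t + 1) := by rw [hA, pow_succ']

end derivCoeff

section derivTerm

variable (m : ℕ) (lam : ℂ)

noncomputable def derivTerm (n t : ℕ) : ℂ[X] :=
  C (lam ^ (n - t) * derivCoeff m n t) * X ^ (n * (m - 1) - m * t)

variable {m}

lemma derivTerm_self_succ (hm : 1 ≤ m) (n : ℕ) : derivTerm m lam n (n + 1) = 0 := by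
  simp [derivTerm, derivCoeff_eq_zero_of_lt_right hm (Nat.lt_succ_self n)]

lemma C_mul_X_pow_mul_derivTerm_zero (n : ℕ) :
    C lam * X ^ (m - 1) * derivTerm m lam n 0 = derivTerm m lam (n + 1) 0 := by
  simp only [derivTerm, derivCoeff_zero_right, Nat.sub_zero, mul_zero, Nat.cast_one, mul_one,
    pow_succ', map_mul, Nat.succ_mul]
  ring

lemma C_mul_X_pow_mul_derivTerm_succ (hm : 1 ≤ m) (n t : ℕ) :
    C lam * X ^ (m - 1) * derivTerm m lam n (t + 1) =
      C (lam ^ (n - t) * derivCoeff m n (t + 1)) * X ^ ((n + 1) * (m - 1) - m * (t + 1)) := by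
  by_cases h0 : derivCoeff m n (t + 1) = 0
  · simp [derivTerm, h0]
  have h : m * (t + 1) ≤ n * (m - 1) := not_lt.mp (mt derivCoeff_eq_zero_of_lt h0)
  have ht : t + 1 ≤ n := not_lt.mp (mt (derivCoeff_eq_zero_of_lt_right hm) h0)
  have hlam : lam ^ (n - t) = lam * lam ^ (n - (t + 1)) := by
    rw [← pow_succ']; congr 1; omega
  have hX : (n + 1) * (m - 1) - m * (t + 1) = (m - 1) + (n * (m - 1) - m * (t + 1)) := by
    rw [Nat.succ_mul]; omega
  simp only [derivTerm, hlam, hX, pow_add, map_mul]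
  ring

lemma derivative_derivTerm (hm : 1 ≤ m) (n t : ℕ) :
    derivative (derivTerm m lam n t) =
      C (lam ^ (n - t) * ((n * (m - 1) - m * t : ℕ) * derivCoeff m n t)) *
        X ^ ((n + 1) * (m - 1) - m * (t + 1)) := by
  rw [derivTerm, derivative_C_mul_X_pow]
  by_cases h : n * (m - 1) - m * t = 0
  · simp [h]
  · have hX : n * (m - 1) - m * t - 1 = (n + 1) * (m - 1) - m * (t + 1) := by
      rw [Nat.succ_mul, mul_add_one]
      generalize n * (m - 1) = a at *
      omega
    rw [hX, mul_comm ((_ : ℕ) : ℂ), mul_assoc]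

lemma C_mul_X_pow_mul_derivTerm_add_derivative (hm : 1 ≤ m) (n t : ℕ) :
    C lam * X ^ (m - 1) * derivTerm m lam n (t + 1) + derivative (derivTerm m lam n t) =
      derivTerm m lam (n + 1) (t + 1) := by
  rw [C_mul_X_pow_mul_derivTerm_succ lam hm, derivative_derivTerm lam hm, derivTerm,
    derivCoeff_succ_succ, ← add_mul, ← map_add, Nat.add_sub_add_right]
  push_cast [mul_add]
  rfl

lemma eq_sum_derivTerm (hm : 1 ≤ m) (p : ℕ → ℂ[X]) (hp0 : p 0 = 1)
    (hprec : ∀ k, p (k + 1) = C lam * X ^ (m - 1) * p k + derivative (p k)) (n : ℕ) :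
    p n = ∑ t ∈ range (n + 1), derivTerm m lam n t := by
  induction n with
  | zero => simp [hp0, derivTerm]
  | succ n ih =>
    rw [hprec, ih, sum_range_succ' _ (n + 1), ← C_mul_X_pow_mul_derivTerm_zero lam]
    simp_rw [← C_mul_X_pow_mul_derivTerm_add_derivative lam hm]
    rw [sum_add_distrib, ← derivative_sum, ← mul_sum, sum_range_succ' (derivTerm m lam n),
      sum_range_succ _ n, derivTerm_self_succ lam hm, mul_add]
    ring

end derivTerm

lemma half_le_norm_sum_of_re_eq_zero {z : ℂ} (hz : z.re = 0) {b : ℕ → ℝ} {B : ℝ}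
    (hb0 : b 0 = B) (hb : ∀ t, |b t| * ‖z‖ ^ t ≤ B * (1 / 2) ^ t) (n : ℕ) :
    B / 2 ≤ ‖∑ t ∈ range (n + 1), (b t : ℂ) * z ^ t‖ := by
  set f : ℕ → ℝ := fun t => b t * (z ^ t).re
  have hre : (∑ t ∈ range (n + 1), (b t : ℂ) * z ^ t).re = ∑ t ∈ range (n + 1), f t := by
    simp [f, Complex.re_sum]
  have hf : ∀ t, |f t| ≤ B * (1 / 2) ^ t := fun t =>
    calc |f t| = |b t| * |(z ^ t).re| := abs_mul _ _
      _ ≤ |b t| * ‖z‖ ^ t := by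
          gcongr; simpa only [norm_pow] using Complex.abs_re_le_norm (z ^ t)
      _ ≤ _ := hb t
  have hf0 : f 0 = B := by simp [f, hb0]
  have hB : 0 ≤ B := by simpa [hf0] using (abs_nonneg (f 0)).trans (hf 0)
  suffices B / 2 ≤ ∑ t ∈ range (n + 1), f t from this.trans (hre ▸ Complex.re_le_norm _)
  cases n with
  | zero => rw [sum_range_one, hf0]; linarith
  | succ N =>
    have hf1 : f 1 = 0 := by simp [f, hz]
    have htail : |∑ t ∈ range N, f (t + 2)| ≤ B / 2 :=
      calc _ ≤ ∑ t ∈ range N, B * (1 / 2) ^ (t + 2) :=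
            (abs_sum_le_sum_abs _ _).trans (sum_le_sum fun t _ => hf _)
        _ = B / 4 * ∑ t ∈ range N, (1 / 2 : ℝ) ^ t := by
            rw [mul_sum]; congr 1 with t; ring
        _ ≤ B / 4 * 2 := by gcongr; exact sum_geometric_two_le N
        _ = B / 2 := by ring
    rw [sum_range_succ', sum_range_succ', hf1, hf0]
    linarith [(abs_le.mp htail).1]

lemma sq_le_rpow_pow {m : ℕ} {θ : ℝ} (hθ : 2 ≤ θ * m) (k : ℕ) : (k : ℝ) ^ 2 ≤ ((k : ℝ) ^ θ) ^ m := by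
  rcases k.eq_zero_or_pos with rfl | hk
  · rw [Nat.cast_zero, zero_pow two_ne_zero]
    positivity
  · rw [← Real.rpow_natCast _ m, ← Real.rpow_mul (Nat.cast_nonneg k), ← Real.rpow_two]
    exact Real.rpow_le_rpow_of_exponent_le (by exact_mod_cast hk) hθ

lemma derivCoeff_mul_pow_le {m : ℕ} (hm : 1 ≤ m) {x : ℝ} (hx : 0 ≤ x) {k : ℕ}
    (hk : (k : ℝ) ^ 2 ≤ x ^ m) (t : ℕ) :
    derivCoeff m k t * x ^ (k * (m - 1) - m * t) * (m : ℝ)⁻¹ ^ t ≤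
      x ^ (k * (m - 1)) * (1 / 2) ^ t := by
  by_cases h : m * t ≤ k * (m - 1)
  · have hsplit : x ^ (k * (m - 1)) = x ^ (k * (m - 1) - m * t) * (x ^ m) ^ t := by
      rw [← pow_mul, ← pow_add, Nat.sub_add_cancel h]
    have hA : (((m - 1) * k.choose 2 : ℕ) : ℝ) ≤ m * x ^ m / 2 := by
      have hchoose : (k.choose 2 : ℝ) ≤ k ^ 2 / 2 := by
        simpa using Nat.choose_le_pow_div (α := ℝ) 2 k
      push_cast [Nat.cast_sub hm]
      calc ((m : ℝ) - 1) * k.choose 2 ≤ m * (k ^ 2 / 2) := by gcongr; linarith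
        _ ≤ m * x ^ m / 2 := by rw [mul_div_assoc]; gcongr
    have hc : (derivCoeff m k t : ℝ) ≤ (m * x ^ m / 2) ^ t :=
      calc (derivCoeff m k t : ℝ) ≤ (((m - 1) * k.choose 2 : ℕ) : ℝ) ^ t := by
            exact_mod_cast derivCoeff_le_pow k t
        _ ≤ _ := by gcongr
    have hm0 : (m : ℝ) ≠ 0 := by positivity
    calc (derivCoeff m k t : ℝ) * x ^ (k * (m - 1) - m * t) * (m : ℝ)⁻¹ ^ t
        ≤ (m * x ^ m / 2) ^ t * x ^ (k * (m - 1) - m * t) * (m : ℝ)⁻¹ ^ t := by gcongr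
      _ = x ^ (k * (m - 1)) * (1 / 2) ^ t := by
          rw [hsplit, div_pow, mul_pow, inv_pow, one_div, inv_pow]; field_simp
  · rw [derivCoeff_eq_zero_of_lt (not_le.mp h)]
    simp only [Nat.cast_zero, zero_mul]
    positivity

theorem half_mul_le_norm_eval {m : ℕ} (hm : 1 ≤ m) {lam : ℂ} (hre : lam.re = 0)
    (hnorm : ‖lam‖ = m) {θ : ℝ} (hθ : 2 ≤ θ * m) {p : ℕ → ℂ[X]} (hp0 : p 0 = 1)
    (hprec : ∀ k, p (k + 1) = C lam * X ^ (m - 1) * p k + derivative (p k)) (k : ℕ) :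
    (1 / 2 : ℝ) * (m : ℝ) ^ k * (k : ℝ) ^ (θ * k * ((m : ℝ) - 1)) ≤
      ‖(p k).eval (((k : ℝ) ^ θ : ℝ) : ℂ)‖ := by
  set x : ℝ := (k : ℝ) ^ θ
  have hx : 0 ≤ x := by positivity
  have hlam0 : lam ≠ 0 := by
    rw [← norm_pos_iff, hnorm]; exact_mod_cast hm
  set S : ℂ := ∑ t ∈ range (k + 1),
    ((derivCoeff m k t * x ^ (k * (m - 1) - m * t) : ℝ) : ℂ) * lam⁻¹ ^ t
  have heval : (p k).eval (x : ℂ) = lam ^ k * S := by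
    rw [eq_sum_derivTerm lam hm p hp0 hprec, eval_finsetSum, mul_sum]
    refine sum_congr rfl fun t ht => ?_
    rw [derivTerm, pow_sub₀ _ hlam0 (by simpa [Nat.lt_succ_iff] using ht)]
    simp only [eval_mul, eval_C, eval_pow, eval_X, inv_pow]
    push_cast
    ring
  have hS : x ^ (k * (m - 1)) / 2 ≤ ‖S‖ := by
    refine half_le_norm_sum_of_re_eq_zero (by simp [Complex.inv_re, hre]) (by simp)
      (fun t => ?_) k
    rw [abs_of_nonneg (by positivity), norm_inv, hnorm]
    exact derivCoeff_mul_pow_le hm hx (sq_le_rpow_pow hθ k) t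
  have hxpow : x ^ (k * (m - 1)) = (k : ℝ) ^ (θ * k * ((m : ℝ) - 1)) := by
    rw [← Real.rpow_natCast, ← Real.rpow_mul (Nat.cast_nonneg k)]
    push_cast [Nat.cast_sub hm]
    ring_nf
  calc (1 / 2 : ℝ) * (m : ℝ) ^ k * (k : ℝ) ^ (θ * k * ((m : ℝ) - 1))
      = (m : ℝ) ^ k * (x ^ (k * (m - 1)) / 2) := by rw [hxpow]; ring
    _ ≤ (m : ℝ) ^ k * ‖S‖ := by gcongr
    _ = ‖(p k).eval (x : ℂ)‖ := by rw [heval, norm_mul, norm_pow, hnorm]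

theorem polynomial_lower_bound (m : ℕ) (hm : 2 ≤ m) (lam : ℂ)
    (hlam : lam = Complex.I * m ∨ lam = -(Complex.I * m))
    (θ : ℝ) (hθ : 2 / (m : ℝ) ≤ θ)
    (p : ℕ → Polynomial ℂ) (hp0 : p 0 = 1)
    (hprec : ∀ k, p (k + 1) =
      Polynomial.C lam * Polynomial.X ^ (m - 1) * p k + Polynomial.derivative (p k)) :
    ∃ K : ℕ → ℕ, StrictMono K ∧
      ∀ j : ℕ, 1 ≤ j →
        0 < K j ∧
        4 * j * m ≤ K j * (m - 1) ∧ K j * (m - 1) ≤ (4 * j + 1) * m ∧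
        (1 / 2 : ℝ) * (m : ℝ) ^ (K j) * (K j : ℝ) ^ (θ * (K j : ℝ) * ((m : ℝ) - 1))
          ≤ ‖(p (K j)).eval (((K j : ℝ) ^ θ : ℝ) : ℂ)‖ := by
  have hd : 0 < m - 1 := by omega
  set K : ℕ → ℕ := fun j => 4 * j * m / (m - 1) + 1
  have hK_lower (j : ℕ) : 4 * j * m < K j * (m - 1) := by
    simpa [K, add_one_mul] using Nat.lt_div_mul_add (a := 4 * j * m) hd
  have hK_upper (j : ℕ) : K j * (m - 1) ≤ 4 * j * m + (m - 1) := by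
    simpa [K, add_one_mul] using Nat.div_mul_le_self (4 * j * m) (m - 1)
  have hK_mono : StrictMono K := strictMono_nat_of_lt_succ fun j =>
    Nat.lt_of_mul_lt_mul_right (a := m - 1) <|
      calc K j * (m - 1) ≤ 4 * j * m + (m - 1) := hK_upper j
        _ < 4 * (j + 1) * m := by rw [mul_add_one, add_mul]; omega
        _ < K (j + 1) * (m - 1) := hK_lower (j + 1)
  have hre : lam.re = 0 := by rcases hlam with rfl | rfl <;> simp
  have hnorm : ‖lam‖ = m := by rcases hlam with rfl | rfl <;> simp
  have hθm : 2 ≤ θ * m := (div_le_iff₀ (by positivity)).mp hθ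
  refine ⟨K, hK_mono, fun j _ => ⟨Nat.succ_pos _, (hK_lower j).le, ?_, ?_⟩⟩
  · have := hK_upper j
    rw [show (4 * j + 1) * m = 4 * j * m + m by ring]; omega
  · exact half_mul_le_norm_eval (by omega) hre hnorm hθm hp0 hprec (K j)
end

section
/- Let f, g : ℝ → ℂ be smooth. Suppose there exist A, B, a, θ, ν > 0 and s ≥ 1 such that for all k ∈ ℕ and x ∈ ℝ: |f^{(k)}(x)| ≤ B^k k! |f(x)| ⟨x⟩^{k·max(1/ν - 1, 0)} and |(gf)^{(k)}(x)| ≤ A B^k k!^s e^{-a|x|^{1/θ}}. Then for all k ∈ ℕ and x ∈ ℝ: |g^{(k)}(x) f(x)| ≤ A (2B)^k k!^s e^{-a|x|^{1/θ}} ⟨x⟩^{k·max(1/ν - 1, 0)}. -/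
open Finset

lemma my_leibniz (f g : ℝ → ℂ) (hf : ContDiff ℝ (⊤ : ℕ∞) f) (hg : ContDiff ℝ (⊤ : ℕ∞) g) (k : ℕ) :
    iteratedDeriv k (fun y => g y * f y) =
      fun x => ∑ j ∈ Finset.range (k + 1),
        (k.choose j : ℂ) * (iteratedDeriv j g x * iteratedDeriv (k - j) f x) := by
  have hdg : ∀ j : ℕ, Differentiable ℝ (iteratedDeriv j g) := fun j =>
    hg.differentiable_iteratedDeriv j (by exact_mod_cast ENat.coe_lt_top j)
  have hdf : ∀ j : ℕ, Differentiable ℝ (iteratedDeriv j f) := fun j =>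
    hf.differentiable_iteratedDeriv j (by exact_mod_cast ENat.coe_lt_top j)
  induction k with
  | zero => ext x; simp
  | succ n ih =>
    ext x
    rw [iteratedDeriv_succ, ih]
    rw [deriv_fun_sum (fun j _ => by
      exact DifferentiableAt.const_mul (((hdg j).differentiableAt).mul (hdf (n - j)).differentiableAt) _)]
    have hstep : ∀ j ∈ Finset.range (n + 1),
        deriv (fun x => (n.choose j : ℂ) * (iteratedDeriv j g x * iteratedDeriv (n - j) f x)) x
          = (n.choose j : ℂ) * (iteratedDeriv (j + 1) g x * iteratedDeriv (n - j) f x)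
            + (n.choose j : ℂ) * (iteratedDeriv j g x * iteratedDeriv (n - j + 1) f x) := by
      intro j hj
      rw [deriv_const_mul (d := fun y => iteratedDeriv j g y * iteratedDeriv (n - j) f y) _
          (((hdg j).differentiableAt).mul (hdf (n - j)).differentiableAt),
        deriv_fun_mul (hdg j).differentiableAt (hdf (n - j)).differentiableAt,
        ← iteratedDeriv_succ, ← iteratedDeriv_succ]
      ring
    rw [Finset.sum_congr rfl hstep, Finset.sum_add_distrib]
    have := Finset.sum_choose_succ_mul
      (fun i j => iteratedDeriv i g x * iteratedDeriv j f x) n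
    rw [this]
    rw [add_comm]
    congr 1
    apply Finset.sum_congr rfl
    intro j hj
    have hjn : j ≤ n := Nat.lt_succ_iff.mp (Finset.mem_range.mp hj)
    rw [Nat.succ_sub hjn]

theorem derivative_estimate_transfer (f g : ℝ → ℂ)
    (hf : ContDiff ℝ (⊤ : ℕ∞) f) (hg : ContDiff ℝ (⊤ : ℕ∞) g)
    (A B a θ ν : ℝ) (hA : 0 < A) (hB : 0 < B) (ha : 0 < a) (hθ : 0 < θ) (hν : 0 < ν)
    (s : ℝ) (hs : 1 ≤ s)
    (h1 : ∀ (k : ℕ) (x : ℝ),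
      ‖iteratedDeriv k f x‖
        ≤ B ^ k * (Nat.factorial k : ℝ) * ‖f x‖
            * (1 + x ^ 2) ^ ((k : ℝ) * max (1 / ν - 1) 0 / 2))
    (h2 : ∀ (k : ℕ) (x : ℝ),
      ‖iteratedDeriv k (fun y => g y * f y) x‖
        ≤ A * B ^ k * (Nat.factorial k : ℝ) ^ s * Real.exp (-a * |x| ^ (1 / θ))) :
    ∀ (k : ℕ) (x : ℝ),
      ‖iteratedDeriv k g x * f x‖
        ≤ A * (2 * B) ^ k * (Nat.factorial k : ℝ) ^ s * Real.exp (-a * |x| ^ (1 / θ))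
            * (1 + x ^ 2) ^ ((k : ℝ) * max (1 / ν - 1) 0 / 2) := by
  intro k
  induction k using Nat.strong_induction_on with
  | _ k IH =>
  intro x
  set m : ℝ := max (1 / ν - 1) 0 with hm
  have hm0 : 0 ≤ m := le_max_right _ _
  set E : ℝ := Real.exp (-a * |x| ^ (1 / θ)) with hE
  have hE0 : 0 < E := Real.exp_pos _
  have hx2 : (1 : ℝ) ≤ 1 + x ^ 2 := by nlinarith [sq_nonneg x]
  have hx2' : (0 : ℝ) < 1 + x ^ 2 := by linarith
  have hP1 : ∀ j : ℕ, 1 ≤ (1 + x ^ 2) ^ ((j : ℝ) * m / 2) :=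
    fun j => Real.one_le_rpow hx2 (by positivity)
  have hPpos : ∀ j : ℕ, 0 < (1 + x ^ 2) ^ ((j : ℝ) * m / 2) :=
    fun j => lt_of_lt_of_le one_pos (hP1 j)
  -- Leibniz identity, with the top term split off
  have hid : iteratedDeriv k g x * f x
      = iteratedDeriv k (fun y => g y * f y) x
        - ∑ j ∈ Finset.range k,
            (k.choose j : ℂ) * (iteratedDeriv j g x * iteratedDeriv (k - j) f x) := by
    have h := congrFun (my_leibniz f g hf hg k) x
    rw [Finset.sum_range_succ] at h
    simp only [Nat.choose_self, Nat.cast_one, one_mul, Nat.sub_self, iteratedDeriv_zero] at h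
    rw [h]; ring
  have habs : ‖iteratedDeriv k g x * f x‖
      ≤ ‖iteratedDeriv k (fun y => g y * f y) x‖
        + ∑ j ∈ Finset.range k,
            (k.choose j : ℝ) * (‖iteratedDeriv j g x‖
              * ‖iteratedDeriv (k - j) f x‖) := by
    rw [hid, sub_eq_add_neg]
    refine le_trans (norm_add_le _ _) ?_
    rw [norm_neg]
    gcongr
    refine le_trans (norm_sum_le _ _) (le_of_eq ?_)
    apply Finset.sum_congr rfl
    intro j _
    rw [norm_mul, norm_mul, Complex.norm_natCast]
  -- bound each summand
  have hterm : ∀ j ∈ Finset.range k,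
      (k.choose j : ℝ) * (‖iteratedDeriv j g x‖
          * ‖iteratedDeriv (k - j) f x‖)
        ≤ (A * B ^ k * (Nat.factorial k : ℝ) ^ s * E
            * (1 + x ^ 2) ^ ((k : ℝ) * m / 2)) * 2 ^ j := by
    intro j hj
    have hjk : j < k := Finset.mem_range.mp hj
    have hjk' : j ≤ k := le_of_lt hjk
    have e1 : ‖iteratedDeriv j g x‖ * ‖iteratedDeriv (k - j) f x‖
        ≤ (B ^ (k - j) * ((k - j).factorial : ℝ)
            * (1 + x ^ 2) ^ (((k - j : ℕ) : ℝ) * m / 2))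
          * ‖iteratedDeriv j g x * f x‖ := by
      calc ‖iteratedDeriv j g x‖ * ‖iteratedDeriv (k - j) f x‖
          ≤ ‖iteratedDeriv j g x‖
            * (B ^ (k - j) * ((k - j).factorial : ℝ) * ‖f x‖
              * (1 + x ^ 2) ^ (((k - j : ℕ) : ℝ) * m / 2)) := by
            exact mul_le_mul_of_nonneg_left (h1 (k - j) x) (norm_nonneg _)
        _ = (B ^ (k - j) * ((k - j).factorial : ℝ)
              * (1 + x ^ 2) ^ (((k - j : ℕ) : ℝ) * m / 2))
            * (‖iteratedDeriv j g x‖ * ‖f x‖) := by ring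
        _ = _ := by rw [norm_mul]
    have e2 := IH j hjk x
    have e3 : ‖iteratedDeriv j g x‖ * ‖iteratedDeriv (k - j) f x‖
        ≤ (B ^ (k - j) * ((k - j).factorial : ℝ)
            * (1 + x ^ 2) ^ (((k - j : ℕ) : ℝ) * m / 2))
          * (A * (2 * B) ^ j * (Nat.factorial j : ℝ) ^ s * E
            * (1 + x ^ 2) ^ ((j : ℝ) * m / 2)) := by
      refine le_trans e1 (mul_le_mul_of_nonneg_left e2 ?_)
      positivity
    -- combine powers of (1+x^2)
    have hPmul : (1 + x ^ 2) ^ (((k - j : ℕ) : ℝ) * m / 2)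
        * (1 + x ^ 2) ^ ((j : ℝ) * m / 2) = (1 + x ^ 2) ^ ((k : ℝ) * m / 2) := by
      rw [← Real.rpow_add hx2']
      congr 1
      have : ((k - j : ℕ) : ℝ) = (k : ℝ) - (j : ℝ) := Nat.cast_sub hjk'
      rw [this]; ring
    have hBpow : B ^ (k - j) * (2 * B) ^ j = 2 ^ j * B ^ k := by
      rw [mul_pow, ← mul_assoc, mul_comm (B ^ (k - j)) ((2:ℝ) ^ j), mul_assoc,
        ← pow_add, Nat.sub_add_cancel hjk']
    -- factorial estimate
    have hsplit : ∀ c : ℝ, 0 < c → c ^ s = c * c ^ (s - 1) := by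
      intro c hc
      have h := Real.rpow_add hc 1 (s - 1)
      rw [show (1 : ℝ) + (s - 1) = s by ring, Real.rpow_one] at h
      exact h
    have hfle : ((j.factorial : ℝ)) ^ s ≤ (j.factorial : ℝ) * ((k.factorial : ℝ)) ^ (s - 1) := by
      have hjf : (0 : ℝ) < (j.factorial : ℝ) := by exact_mod_cast j.factorial_pos
      rw [hsplit _ hjf]
      have hc : (j.factorial : ℝ) ≤ (k.factorial : ℝ) := by
        exact_mod_cast Nat.factorial_le hjk'
      gcongr <;> first | linarith | exact hc | positivity
    have hkf : (0 : ℝ) < (k.factorial : ℝ) := by exact_mod_cast k.factorial_pos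
    have hfact : (k.choose j : ℝ) * ((k - j).factorial : ℝ) * ((j.factorial : ℝ)) ^ s
        ≤ ((k.factorial : ℝ)) ^ s := by
      have hprod : (k.choose j : ℝ) * ((k - j).factorial : ℝ) * (j.factorial : ℝ)
          = (k.factorial : ℝ) := by
        have := Nat.choose_mul_factorial_mul_factorial hjk'
        push_cast [← this]
        ring
      calc (k.choose j : ℝ) * ((k - j).factorial : ℝ) * ((j.factorial : ℝ)) ^ s
          ≤ (k.choose j : ℝ) * ((k - j).factorial : ℝ)
            * ((j.factorial : ℝ) * ((k.factorial : ℝ)) ^ (s - 1)) := by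
            refine mul_le_mul_of_nonneg_left hfle ?_
            positivity
        _ = (k.factorial : ℝ) * ((k.factorial : ℝ)) ^ (s - 1) := by
            rw [← hprod]; ring
        _ = ((k.factorial : ℝ)) ^ s := (hsplit _ hkf).symm
    calc (k.choose j : ℝ) * (‖iteratedDeriv j g x‖
            * ‖iteratedDeriv (k - j) f x‖)
        ≤ (k.choose j : ℝ) * ((B ^ (k - j) * ((k - j).factorial : ℝ)
              * (1 + x ^ 2) ^ (((k - j : ℕ) : ℝ) * m / 2))
            * (A * (2 * B) ^ j * (Nat.factorial j : ℝ) ^ s * E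
              * (1 + x ^ 2) ^ ((j : ℝ) * m / 2))) := by
          exact mul_le_mul_of_nonneg_left e3 (by positivity)
      _ = ((k.choose j : ℝ) * ((k - j).factorial : ℝ) * ((j.factorial : ℝ)) ^ s)
            * (A * E * (B ^ (k - j) * (2 * B) ^ j)
              * ((1 + x ^ 2) ^ (((k - j : ℕ) : ℝ) * m / 2)
                * (1 + x ^ 2) ^ ((j : ℝ) * m / 2))) := by ring
      _ ≤ ((k.factorial : ℝ)) ^ s
            * (A * E * (B ^ (k - j) * (2 * B) ^ j)
              * ((1 + x ^ 2) ^ (((k - j : ℕ) : ℝ) * m / 2)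
                * (1 + x ^ 2) ^ ((j : ℝ) * m / 2))) := by
          refine mul_le_mul_of_nonneg_right hfact ?_
          positivity
      _ = (A * B ^ k * (Nat.factorial k : ℝ) ^ s * E
            * (1 + x ^ 2) ^ ((k : ℝ) * m / 2)) * 2 ^ j := by
          rw [hPmul, hBpow]; ring
  -- sum everything up
  have hsum : ∑ j ∈ Finset.range k,
      (k.choose j : ℝ) * (‖iteratedDeriv j g x‖
        * ‖iteratedDeriv (k - j) f x‖)
      ≤ (A * B ^ k * (Nat.factorial k : ℝ) ^ s * E
          * (1 + x ^ 2) ^ ((k : ℝ) * m / 2)) * (2 ^ k - 1) := by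
    refine le_trans (Finset.sum_le_sum hterm) (le_of_eq ?_)
    rw [← Finset.mul_sum]
    congr 1
    rw [geom_sum_eq (by norm_num : (2:ℝ) ≠ 1)]
    norm_num
  have hfirst : ‖iteratedDeriv k (fun y => g y * f y) x‖
      ≤ A * B ^ k * (Nat.factorial k : ℝ) ^ s * E
          * (1 + x ^ 2) ^ ((k : ℝ) * m / 2) := by
    refine le_trans (h2 k x) ?_
    exact le_mul_of_one_le_right (by positivity) (hP1 k)
  calc ‖iteratedDeriv k g x * f x‖
      ≤ ‖iteratedDeriv k (fun y => g y * f y) x‖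
        + ∑ j ∈ Finset.range k,
            (k.choose j : ℝ) * (‖iteratedDeriv j g x‖
              * ‖iteratedDeriv (k - j) f x‖) := habs
    _ ≤ (A * B ^ k * (Nat.factorial k : ℝ) ^ s * E
          * (1 + x ^ 2) ^ ((k : ℝ) * m / 2))
        + (A * B ^ k * (Nat.factorial k : ℝ) ^ s * E
          * (1 + x ^ 2) ^ ((k : ℝ) * m / 2)) * (2 ^ k - 1) := add_le_add hfirst hsum
    _ = A * (2 * B) ^ k * (Nat.factorial k : ℝ) ^ s * E
          * (1 + x ^ 2) ^ ((k : ℝ) * m / 2) := by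
        rw [mul_pow]; ring
end

section
/- For every t ∈ ℝ there exists a constant C_t ≥ 1 such that for all k ∈ ℕ and x ∈ ℝ, |d^k/dx^k (1+x²)^{t/2}| ≤ C_t · 2^{3k} · k! · (1+x²)^{(t-k)/2}. -/
/-!
Induction on `k` gives `dᵏ/dxᵏ (1 + x²)^(t/2) = P_k(x) (1 + x²)^(t/2 - k)` with polynomials
`P_{k+1} = P_k' (1 + X²) + (t - 2k) X P_k` of degree at most `k`. Differentiating a polynomial of
degree `≤ k` multiplies the ℓ¹ norm of its coefficients by at most `k`, so with `M = ⌈|t|⌉`,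
`‖P_{k+1}‖₁ ≤ (|t| + 4k) ‖P_k‖₁ ≤ 4 (M + k + 1) ‖P_k‖₁`, whence
`‖P_k‖₁ ≤ 4ᵏ k! (M+k choose k) ≤ 2^M 8ᵏ k!`. Finally `|P_k(x)| ≤ ‖P_k‖₁ (1 + x²)^(k/2)`.
-/

open Finset

namespace Polynomial

variable {A : Type*} [SeminormedRing A]

noncomputable def l1Norm (p : A[X]) : ℝ := p.sum fun _ a => ‖a‖

lemma l1Norm_eq_sum_range {p : A[X]} {n : ℕ} (hn : p.natDegree < n) :
    p.l1Norm = ∑ i ∈ range n, ‖p.coeff i‖ :=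
  sum_over_range' p (fun _ => norm_zero) n hn

lemma l1Norm_nonneg (p : A[X]) : 0 ≤ p.l1Norm :=
  Finset.sum_nonneg fun _ _ => norm_nonneg _

lemma l1Norm_add_le (p q : A[X]) : (p + q).l1Norm ≤ p.l1Norm + q.l1Norm := by
  set n := max (max p.natDegree q.natDegree) (p + q).natDegree + 1
  rw [l1Norm_eq_sum_range (n := n) (by omega), l1Norm_eq_sum_range (n := n) (by omega),
    l1Norm_eq_sum_range (n := n) (by omega), ← sum_add_distrib]
  gcongr with i
  exact (coeff_add p q i).symm ▸ norm_add_le _ _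

lemma l1Norm_C_mul_le (a : A) (p : A[X]) : (C a * p).l1Norm ≤ ‖a‖ * p.l1Norm := by
  have hdeg : (C a * p).natDegree < p.natDegree + 1 :=
    Nat.lt_succ_of_le (natDegree_C_mul_le a p)
  rw [l1Norm_eq_sum_range hdeg, l1Norm_eq_sum_range (Nat.lt_succ_self _), mul_sum]
  gcongr with i
  exact (coeff_C_mul p).symm ▸ norm_mul_le _ _

lemma l1Norm_mul_X_pow (p : A[X]) (n : ℕ) : (p * X ^ n).l1Norm = p.l1Norm := by
  have hdeg : (p * X ^ n).natDegree < n + (p.natDegree + 1) := by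
    have := natDegree_mul_le_of_le (le_refl p.natDegree) (natDegree_X_pow_le (R := A) n)
    omega
  rw [l1Norm_eq_sum_range hdeg, sum_range_add, l1Norm_eq_sum_range (Nat.lt_succ_self _)]
  have hlow : ∀ i ∈ range n, ‖(p * X ^ n).coeff i‖ = 0 := fun i hi => by
    rw [coeff_mul_X_pow', if_neg (by simpa using hi), norm_zero]
  rw [sum_eq_zero hlow, zero_add]
  simp_rw [add_comm n, coeff_mul_X_pow]

lemma l1Norm_mul_X (p : A[X]) : (p * X).l1Norm = p.l1Norm := by
  simpa using l1Norm_mul_X_pow p 1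

lemma l1Norm_derivative_le (p : A[X]) : p.derivative.l1Norm ≤ p.natDegree * p.l1Norm := by
  set N := p.natDegree
  have hdeg : p.derivative.natDegree < N + 1 :=
    Nat.lt_succ_of_le ((natDegree_derivative_le p).trans (Nat.sub_le _ _))
  have hterm : ∀ i ∈ range (N + 1), ‖p.derivative.coeff i‖ ≤ N * ‖p.coeff (i + 1)‖ := by
    intro i _
    rcases le_or_gt (i + 1) N with hi | hi
    · rw [coeff_derivative, ← Nat.cast_succ, ← nsmul_eq_mul']
      exact norm_nsmul_le.trans (by gcongr)
    · rw [coeff_derivative, coeff_eq_zero_of_natDegree_lt hi, zero_mul, norm_zero]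
      positivity
  calc p.derivative.l1Norm = ∑ i ∈ range (N + 1), ‖p.derivative.coeff i‖ :=
        l1Norm_eq_sum_range hdeg
    _ ≤ ∑ i ∈ range (N + 1), N * ‖p.coeff (i + 1)‖ := sum_le_sum hterm
    _ ≤ N * ∑ i ∈ range (N + 1 + 1), ‖p.coeff i‖ := by
        rw [← mul_sum, sum_range_succ' _ (N + 1)]
        have := norm_nonneg (p.coeff 0)
        gcongr
        linarith
    _ = N * p.l1Norm := by rw [l1Norm_eq_sum_range (n := N + 1 + 1) (by omega)]

lemma norm_eval_le_l1Norm_mul_pow [NormOneClass A] {p : A[X]} {n : ℕ} (hp : p.natDegree ≤ n)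
    {x : A} {R : ℝ} (hxR : ‖x‖ ≤ R) (hR : 1 ≤ R) :
    ‖p.eval x‖ ≤ p.l1Norm * R ^ n := by
  have hdeg : p.natDegree < n + 1 := Nat.lt_succ_of_le hp
  rw [eval_eq_sum_range' hdeg, l1Norm_eq_sum_range hdeg, sum_mul]
  refine (norm_sum_le _ _).trans (sum_le_sum fun i hi => ?_)
  calc ‖p.coeff i * x ^ i‖ ≤ ‖p.coeff i‖ * ‖x‖ ^ i :=
        (norm_mul_le _ _).trans (by gcongr; exact norm_pow_le x i)
    _ ≤ ‖p.coeff i‖ * R ^ n := by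
        gcongr
        exact (pow_le_pow_left₀ (norm_nonneg x) hxR i).trans
          (pow_le_pow_right₀ hR (Nat.lt_succ_iff.mp (mem_range.mp hi)))

end Polynomial

open Polynomial

lemma hasDerivAt_eval_mul_one_add_sq_rpow (p : ℝ[X]) (s x : ℝ) :
    HasDerivAt (fun y => p.eval y * (1 + y ^ 2) ^ s)
      ((derivative p * (1 + X ^ 2) + C (2 * s) * (p * X)).eval x * (1 + x ^ 2) ^ (s - 1)) x := by
  have hpos : 0 < 1 + x ^ 2 := by positivity
  have hsq : HasDerivAt (fun y : ℝ => 1 + y ^ 2) (2 * x) x := by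
    simpa using (hasDerivAt_pow 2 x).const_add 1
  have hsplit : (1 + x ^ 2) ^ s = (1 + x ^ 2) * (1 + x ^ 2) ^ (s - 1) := by
    conv_lhs => rw [← add_sub_cancel 1 s, Real.rpow_add hpos, Real.rpow_one]
  refine ((p.hasDerivAt x).mul (hsq.rpow_const (p := s) (Or.inl hpos.ne'))).congr_deriv ?_
  simp only [eval_add, eval_mul, eval_C, eval_pow, eval_X, eval_one]
  rw [hsplit]
  ring

noncomputable def bracketDerivPoly (t : ℝ) : ℕ → ℝ[X]
  | 0 => 1
  | k + 1 => derivative (bracketDerivPoly t k) * (1 + X ^ 2)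
      + C (t - 2 * k) * (bracketDerivPoly t k * X)

lemma iteratedDeriv_one_add_sq_rpow (t : ℝ) (k : ℕ) :
    iteratedDeriv k (fun y : ℝ => (1 + y ^ 2) ^ (t / 2))
      = fun x => (bracketDerivPoly t k).eval x * (1 + x ^ 2) ^ (t / 2 - k) := by
  induction k with
  | zero => simp [bracketDerivPoly]
  | succ k ih =>
    ext x
    rw [iteratedDeriv_succ, ih,
      (hasDerivAt_eval_mul_one_add_sq_rpow (bracketDerivPoly t k) (t / 2 - k) x).deriv,
      bracketDerivPoly]
    push_cast
    ring_nf

lemma natDegree_derivative_mul_one_add_sq_le {R : Type*} [Semiring R] {p : R[X]} {k : ℕ}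
    (hp : p.natDegree ≤ k) : (derivative p * (1 + X ^ 2)).natDegree ≤ k + 1 := by
  rcases Nat.eq_zero_or_pos p.natDegree with h0 | h0
  · simp [derivative_of_natDegree_zero h0]
  · refine natDegree_mul_le_of_le (m := k - 1) (n := 2) ?_ ?_ |>.trans (by omega)
    · exact (natDegree_derivative_le p).trans (by omega)
    · compute_degree!

lemma natDegree_bracketDerivPoly_le (t : ℝ) (k : ℕ) : (bracketDerivPoly t k).natDegree ≤ k := by
  induction k with
  | zero => simp [bracketDerivPoly]
  | succ k ih =>
    refine natDegree_add_le_of_degree_le (natDegree_derivative_mul_one_add_sq_le ih)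
      ((natDegree_C_mul_le _ _).trans ?_)
    exact natDegree_mul_le_of_le ih natDegree_X_le

lemma l1Norm_bracketDerivPoly_succ_le (t : ℝ) (k : ℕ) :
    (bracketDerivPoly t (k + 1)).l1Norm ≤ (|t| + 4 * k) * (bracketDerivPoly t k).l1Norm := by
  set p := bracketDerivPoly t k
  have hdeg : (p.natDegree : ℝ) ≤ k := by exact_mod_cast natDegree_bracketDerivPoly_le t k
  have hcoef : |t - 2 * k| ≤ |t| + 2 * k := by
    simpa using abs_sub t (2 * (k : ℝ))
  have hp := l1Norm_nonneg p
  calc (bracketDerivPoly t (k + 1)).l1Norm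
      ≤ (derivative p).l1Norm + (derivative p * X ^ 2).l1Norm
          + |t - 2 * k| * (p * X).l1Norm := by
        rw [bracketDerivPoly, mul_add, mul_one]
        refine (l1Norm_add_le _ _).trans (add_le_add (l1Norm_add_le _ _) ?_)
        simpa using l1Norm_C_mul_le (t - 2 * k : ℝ) (p * X)
    _ ≤ (|t| + 4 * k) * p.l1Norm := by
        rw [l1Norm_mul_X_pow, l1Norm_mul_X]
        linarith [l1Norm_derivative_le p, mul_le_mul_of_nonneg_right hdeg hp,
          mul_le_mul_of_nonneg_right hcoef hp]

lemma le_two_pow_mul_eight_pow_mul_factorial {a : ℕ → ℝ} (M : ℕ) (h0 : a 0 ≤ 1)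
    (hsucc : ∀ k : ℕ, a (k + 1) ≤ 4 * (M + k + 1) * a k) (k : ℕ) :
    a k ≤ 2 ^ M * 8 ^ k * k.factorial := by
  have hchoose : ∀ k : ℕ, a k ≤ 4 ^ k * k.factorial * (M + k).choose k := by
    intro k
    induction k with
    | zero => simpa using h0
    | succ k ih =>
      have hstep : ((M + k + 1 : ℕ) : ℝ) * (M + k).choose k
          = (M + k + 1).choose (k + 1) * (k + 1) := by
        exact_mod_cast Nat.add_one_mul_choose_eq (M + k) k
      calc a (k + 1) ≤ 4 * (M + k + 1) * (4 ^ k * k.factorial * (M + k).choose k) :=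
            (hsucc k).trans (by gcongr)
        _ = 4 ^ (k + 1) * (k + 1).factorial * (M + (k + 1)).choose (k + 1) := by
            push_cast at hstep
            rw [Nat.factorial_succ, ← add_assoc]
            push_cast
            linear_combination 4 ^ (k + 1) * (k.factorial : ℝ) * hstep
  calc a k ≤ 4 ^ k * k.factorial * (M + k).choose k := hchoose k
    _ ≤ 4 ^ k * k.factorial * 2 ^ (M + k) := by
        gcongr
        exact_mod_cast Nat.choose_le_two_pow (M + k) k
    _ = 2 ^ M * 8 ^ k * k.factorial := by
        rw [pow_add, show (8 : ℝ) = 4 * 2 by norm_num, mul_pow]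
        ring

lemma l1Norm_bracketDerivPoly_le (t : ℝ) (k : ℕ) :
    (bracketDerivPoly t k).l1Norm ≤ 2 ^ ⌈|t|⌉₊ * 8 ^ k * k.factorial := by
  refine le_two_pow_mul_eight_pow_mul_factorial (a := fun k => (bracketDerivPoly t k).l1Norm) _
    ?_ (fun k => (l1Norm_bracketDerivPoly_succ_le t k).trans ?_) k
  · rw [bracketDerivPoly, l1Norm_eq_sum_range (n := 1) (by simp)]
    simp
  · exact mul_le_mul_of_nonneg_right (by linarith [Nat.le_ceil |t|]) (l1Norm_nonneg _)

lemma abs_eval_le_l1Norm_mul_one_add_sq_rpow {p : ℝ[X]} {n : ℕ} (hp : p.natDegree ≤ n)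
    (x : ℝ) :
    |p.eval x| ≤ p.l1Norm * (1 + x ^ 2) ^ ((n : ℝ) / 2) := by
  have hsqrt : √(1 + x ^ 2) ^ n = (1 + x ^ 2) ^ ((n : ℝ) / 2) := by
    rw [Real.sqrt_eq_rpow, ← Real.rpow_natCast, ← Real.rpow_mul (by positivity)]
    ring_nf
  rw [← hsqrt]
  refine norm_eval_le_l1Norm_mul_pow hp ?_ ?_
  · simpa [add_comm] using Real.abs_le_sqrt (le_add_of_nonneg_right zero_le_one)
  · exact Real.one_le_sqrt.mpr (by nlinarith)

theorem bracket_derivative_bound (t : ℝ) :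
    ∃ C : ℝ, 1 ≤ C ∧
      ∀ (k : ℕ) (x : ℝ),
        |iteratedDeriv k (fun y : ℝ => (1 + y ^ 2) ^ (t / 2)) x|
          ≤ C * 2 ^ (3 * k) * (Nat.factorial k : ℝ) * (1 + x ^ 2) ^ ((t - k) / 2) := by
  refine ⟨2 ^ ⌈|t|⌉₊, one_le_pow₀ one_le_two, fun k x => ?_⟩
  have hpos : 0 < 1 + x ^ 2 := by positivity
  rw [iteratedDeriv_one_add_sq_rpow, abs_mul, abs_of_pos (Real.rpow_pos_of_pos hpos _)]
  calc |(bracketDerivPoly t k).eval x| * (1 + x ^ 2) ^ (t / 2 - k)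
      ≤ (bracketDerivPoly t k).l1Norm * (1 + x ^ 2) ^ ((k : ℝ) / 2)
          * (1 + x ^ 2) ^ (t / 2 - k) :=
        mul_le_mul_of_nonneg_right
          (abs_eval_le_l1Norm_mul_one_add_sq_rpow (natDegree_bracketDerivPoly_le t k) x)
          (by positivity)
    _ = (bracketDerivPoly t k).l1Norm * (1 + x ^ 2) ^ ((t - k) / 2) := by
        rw [mul_assoc, ← Real.rpow_add hpos]
        ring_nf
    _ ≤ 2 ^ ⌈|t|⌉₊ * 8 ^ k * k.factorial * (1 + x ^ 2) ^ ((t - k) / 2) := by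
        gcongr
        exact l1Norm_bracketDerivPoly_le t k
    _ = 2 ^ ⌈|t|⌉₊ * 2 ^ (3 * k) * k.factorial * (1 + x ^ 2) ^ ((t - k) / 2) := by
        rw [pow_mul]
        norm_num
end

section
/- Let θ > 0 and f(x) = exp(-(1+x²)^{1/(2θ)}) for x ∈ ℝ. Then there exists C ≥ 1 such that for all k ∈ ℕ and x ∈ ℝ, |f^{(k)}(x)| ≤ C^k k! f(x) (1+x²)^{k·max(1/θ - 1, 0)/2}. -/
/-!
The function extends holomorphically to `F z = exp (-(1 + z²) ^ s)`, `s = 1/(2θ)`, wherever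
`1 + z²` avoids the slit `(-∞, 0]`. On the disc of radius `r ≍ ⟨x⟩^(-m)`, `m = max (1/θ - 1) 0`,
around a real point `x`, the point `1 + z²` stays within `⟨x⟩²/2` of `⟨x⟩²`, and the mean value
theorem for `u ↦ u ^ s` gives `|(1 + z²)^s - ⟨x⟩^(2s)| = O(⟨x⟩^(2s-2) · ⟨x⟩^(1-m)) = O(1)`
because `2s - 1 ≤ m`. Hence `|F| ≤ e^A f(x)` on that disc, with `A = |s| 2^|s-1|`, and
Cauchy's estimate yields `|f^(k)(x)| ≤ k! e^A f(x) r^(-k)`.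
-/

open Complex Metric Nat

lemma rpow_le_rpow_abs_mul_rpow {c L t : ℝ} (a : ℝ) (hc : 0 < c) (hL : 0 < L)
    (hlo : L / c ≤ t) (hhi : t ≤ c * L) : t ^ a ≤ c ^ |a| * L ^ a := by
  have ht : 0 < t := (div_pos hL hc).trans_le hlo
  rcases le_total 0 a with ha | ha
  · calc t ^ a ≤ (c * L) ^ a := Real.rpow_le_rpow ht.le hhi ha
      _ = c ^ |a| * L ^ a := by rw [abs_of_nonneg ha, Real.mul_rpow hc.le hL.le]
  · calc t ^ a ≤ (L / c) ^ a := Real.rpow_le_rpow_of_nonpos (div_pos hL hc) hlo ha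
      _ = c ^ |a| * L ^ a := by
        rw [abs_of_nonpos ha, Real.div_rpow hL.le hc.le, Real.rpow_neg hc.le]
        ring

lemma half_le_re_of_norm_sub_le {L : ℝ} {w : ℂ} (hw : ‖w - L‖ ≤ L / 2) : L / 2 ≤ w.re := by
  have := (abs_le.mp ((abs_re_le_norm (w - L)).trans hw)).1
  simp only [sub_re, ofReal_re] at this
  linarith

lemma norm_cpow_sub_cpow_le {L : ℝ} (hL : 0 < L) {w : ℂ} (hw : ‖w - L‖ ≤ L / 2) (s : ℝ) :
    ‖w ^ (s : ℂ) - (L : ℂ) ^ (s : ℂ)‖ ≤ |s| * 2 ^ |s - 1| * L ^ (s - 1) * ‖w - L‖ := by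
  have hball : ∀ ζ ∈ closedBall (L : ℂ) (L / 2), L / 2 ≤ ζ.re ∧ ‖ζ‖ ≤ 2 * L := by
    intro ζ hζ
    rw [mem_closedBall, dist_eq_norm] at hζ
    have hnorm := norm_le_norm_add_norm_sub' ζ (L : ℂ)
    rw [norm_real, Real.norm_of_nonneg hL.le] at hnorm
    exact ⟨half_le_re_of_norm_sub_le hζ, by linarith⟩
  refine Convex.norm_image_sub_le_of_norm_hasDerivWithin_le (f := fun u : ℂ => u ^ (s : ℂ))
    (s := closedBall (L : ℂ) (L / 2))
    (fun ζ hζ => ((hasDerivAt_id ζ).cpow_const ?_).hasDerivWithinAt) (fun ζ hζ => ?_)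
    (convex_closedBall _ _) (mem_closedBall_self (by positivity))
    (by rwa [mem_closedBall, dist_eq_norm])
  · exact mem_slitPlane_iff.mpr (Or.inl (by simp only [id]; linarith [(hball ζ hζ).1]))
  · obtain ⟨hre, hnorm⟩ := hball ζ hζ
    have hexp : (s : ℂ) - 1 = ((s - 1 : ℝ) : ℂ) := by push_cast; ring
    rw [id, mul_one, norm_mul, hexp, norm_cpow_real, norm_real, Real.norm_eq_abs, mul_assoc]
    gcongr
    exact rpow_le_rpow_abs_mul_rpow _ two_pos hL (hre.trans (re_le_norm ζ)) hnorm

lemma norm_one_add_sq_sub_le {x r : ℝ} {z : ℂ} (hr : r ≤ 1) (hz : ‖z - x‖ ≤ r) :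
    ‖(1 + z ^ 2) - ((1 + x ^ 2 : ℝ) : ℂ)‖ ≤ 3 * r * √(1 + x ^ 2) := by
  have hx : |x| ≤ √(1 + x ^ 2) := Real.abs_le_sqrt (by linarith)
  have h1 : 1 ≤ √(1 + x ^ 2) := Real.one_le_sqrt.mpr (by nlinarith)
  have hsum : ‖z + x‖ ≤ r + 2 * |x| := by
    calc ‖z + x‖ = ‖(z - x) + ((2 * x : ℝ) : ℂ)‖ := by push_cast; ring_nf
      _ ≤ r + 2 * |x| := by
        refine (norm_add_le _ _).trans (add_le_add hz ?_)
        rw [norm_real, Real.norm_eq_abs, abs_mul, abs_two]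
  have hfac : (1 + z ^ 2) - ((1 + x ^ 2 : ℝ) : ℂ) = (z - x) * (z + x) := by push_cast; ring
  have hr0 : 0 ≤ r := (norm_nonneg _).trans hz
  rw [hfac, norm_mul]
  calc ‖z - x‖ * ‖z + x‖ ≤ r * (r + 2 * |x|) := by gcongr
    _ ≤ 3 * r * √(1 + x ^ 2) := by nlinarith

lemma norm_cexp_neg_cpow_le {L : ℝ} (hL : 0 < L) {w : ℂ} (s : ℝ) (hw : ‖w - L‖ ≤ L / 2)
    (hsmall : L ^ (s - 1) * ‖w - L‖ ≤ 1) :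
    ‖cexp (-w ^ (s : ℂ))‖ ≤ Real.exp (|s| * 2 ^ |s - 1|) * Real.exp (-L ^ s) := by
  have hcpow := norm_cpow_sub_cpow_le hL hw s
  rw [← ofReal_cpow hL.le, norm_sub_rev] at hcpow
  have hre : L ^ s - (w ^ (s : ℂ)).re ≤ ‖((L ^ s : ℝ) : ℂ) - w ^ (s : ℂ)‖ := by
    simpa using re_le_norm (((L ^ s : ℝ) : ℂ) - w ^ (s : ℂ))
  have hA : 0 ≤ |s| * 2 ^ |s - 1| := by positivity
  rw [norm_exp, ← Real.exp_add, Real.exp_le_exp, neg_re]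
  nlinarith

noncomputable def cauchyRadius (m x : ℝ) : ℝ := (1 + x ^ 2) ^ (-(m / 2)) / 6

lemma norm_one_add_sq_sub_le_of_mem_closedBall {m x : ℝ} (hm : 0 ≤ m) {z : ℂ}
    (hz : z ∈ closedBall (x : ℂ) (cauchyRadius m x)) :
    ‖(1 + z ^ 2) - ((1 + x ^ 2 : ℝ) : ℂ)‖ ≤ (1 + x ^ 2) ^ ((1 - m) / 2) / 2 := by
  have hL : 1 ≤ 1 + x ^ 2 := by nlinarith
  have hr : cauchyRadius m x ≤ 1 := by
    have := Real.rpow_le_one_of_one_le_of_nonpos hL (by linarith : -(m / 2) ≤ 0)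
    rw [cauchyRadius]; linarith
  rw [mem_closedBall, dist_eq_norm] at hz
  refine (norm_one_add_sq_sub_le hr hz).trans_eq ?_
  rw [cauchyRadius, Real.sqrt_eq_rpow, mul_assoc, div_mul_eq_mul_div, ← Real.rpow_add (by linarith)]
  ring_nf

lemma one_add_sq_mem_slitPlane_of_mem_closedBall {m x : ℝ} (hm : 0 ≤ m) {z : ℂ}
    (hz : z ∈ closedBall (x : ℂ) (cauchyRadius m x)) : 1 + z ^ 2 ∈ slitPlane := by
  have hL : 1 ≤ 1 + x ^ 2 := by nlinarith
  have hnear := (norm_one_add_sq_sub_le_of_mem_closedBall hm hz).trans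
    (div_le_div_of_nonneg_right (Real.rpow_le_self_of_one_le hL (by linarith)) two_pos.le)
  exact mem_slitPlane_iff.mpr (Or.inl ((by linarith : (0 : ℝ) < (1 + x ^ 2) / 2).trans_le
    (half_le_re_of_norm_sub_le hnear)))

noncomputable def gsExtension (s : ℝ) (z : ℂ) : ℂ := cexp (-(1 + z ^ 2) ^ (s : ℂ))

lemma gsExtension_ofReal (s x : ℝ) :
    gsExtension s x = ((Real.exp (-(1 + x ^ 2) ^ s) : ℝ) : ℂ) := by
  rw [gsExtension, ofReal_exp, ofReal_neg, ofReal_cpow (by positivity)]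
  push_cast
  rfl

lemma differentiableOn_gsExtension (s : ℝ) :
    DifferentiableOn ℂ (gsExtension s) {z | 1 + z ^ 2 ∈ slitPlane} := by
  intro z hz
  have hpoly : DifferentiableAt ℂ (fun w : ℂ => 1 + w ^ 2) z := by fun_prop
  exact (hpoly.hasDerivAt.cpow_const hz).differentiableAt.neg.cexp.differentiableWithinAt

lemma norm_gsExtension_le_of_mem_closedBall {s m x : ℝ} (hm0 : 0 ≤ m) (hm : 2 * s - 1 ≤ m)
    {z : ℂ} (hz : z ∈ closedBall (x : ℂ) (cauchyRadius m x)) :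
    ‖gsExtension s z‖ ≤ Real.exp (|s| * 2 ^ |s - 1|) * Real.exp (-(1 + x ^ 2) ^ s) := by
  have hL : 1 ≤ 1 + x ^ 2 := by nlinarith
  have hnear := norm_one_add_sq_sub_le_of_mem_closedBall hm0 hz
  refine norm_cexp_neg_cpow_le (by linarith) s (hnear.trans ?_) ?_
  · exact div_le_div_of_nonneg_right (Real.rpow_le_self_of_one_le hL (by linarith)) two_pos.le
  · calc (1 + x ^ 2) ^ (s - 1) * ‖1 + z ^ 2 - ((1 + x ^ 2 : ℝ) : ℂ)‖
        ≤ (1 + x ^ 2) ^ (s - 1) * ((1 + x ^ 2) ^ ((1 - m) / 2) / 2) := by gcongr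
      _ = (1 + x ^ 2) ^ ((2 * s - 1 - m) / 2) / 2 := by
        rw [mul_div_assoc', ← Real.rpow_add (by linarith)]
        ring_nf
      _ ≤ 1 := by
        have := Real.rpow_le_one_of_one_le_of_nonpos hL (by linarith : (2 * s - 1 - m) / 2 ≤ 0)
        linarith

theorem iteratedDeriv_eq_re_iteratedDeriv {F : ℂ → ℂ} {U : Set ℂ} (hU : IsOpen U)
    (hF : DifferentiableOn ℂ F U) (hℝU : ∀ x : ℝ, (x : ℂ) ∈ U) {f : ℝ → ℝ}
    (hf : ∀ x : ℝ, f x = (F x).re) (k : ℕ) (x : ℝ) :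
    iteratedDeriv k f x = (iteratedDeriv k F x).re := by
  induction k generalizing x with
  | zero => simpa using hf x
  | succ k ih =>
    have hdiff : DifferentiableAt ℂ (iteratedDeriv k F) x := by
      rw [iteratedDeriv_eq_iterate]
      exact ((hF.analyticOnNhd hU).iterated_deriv k x (hℝU x)).differentiableAt
    rw [iteratedDeriv_succ, iteratedDeriv_succ, funext ih]
    exact hdiff.hasDerivAt.real_of_complex.deriv

theorem abs_iteratedDeriv_exp_neg_rpow_le {s m : ℝ} (hm0 : 0 ≤ m) (hm : 2 * s - 1 ≤ m)
    (k : ℕ) (x : ℝ) :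
    |iteratedDeriv k (fun y : ℝ => Real.exp (-(1 + y ^ 2) ^ s)) x|
      ≤ k ! * (Real.exp (|s| * 2 ^ |s - 1|) * Real.exp (-(1 + x ^ 2) ^ s))
        / cauchyRadius m x ^ k := by
  have hU : IsOpen {z : ℂ | 1 + z ^ 2 ∈ slitPlane} :=
    isOpen_slitPlane.preimage (by fun_prop)
  have hℝU (y : ℝ) : (y : ℂ) ∈ {z : ℂ | 1 + z ^ 2 ∈ slitPlane} :=
    one_add_sq_mem_slitPlane_of_mem_closedBall hm0 (mem_closedBall_self (by
      unfold cauchyRadius; positivity))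
  rw [iteratedDeriv_eq_re_iteratedDeriv hU (differentiableOn_gsExtension s) hℝU
    (fun y => by rw [gsExtension_ofReal, ofReal_re])]
  refine (abs_re_le_norm _).trans
    (norm_iteratedDeriv_le_of_forall_mem_sphere_norm_le k (by unfold cauchyRadius; positivity)
      ((differentiableOn_gsExtension s).diffContOnCl_ball
        fun z hz => one_add_sq_mem_slitPlane_of_mem_closedBall hm0 hz)
      fun z hz => norm_gsExtension_le_of_mem_closedBall hm0 hm (sphere_subset_closedBall hz))

lemma inv_cauchyRadius_pow (m x : ℝ) (k : ℕ) :
    (cauchyRadius m x ^ k)⁻¹ = 6 ^ k * (1 + x ^ 2) ^ ((k : ℝ) * m / 2) := by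
  have hpow : ((1 + x ^ 2) ^ (-(m / 2))) ^ k = ((1 + x ^ 2) ^ ((k : ℝ) * m / 2))⁻¹ := by
    rw [← Real.rpow_natCast, ← Real.rpow_mul (by positivity), ← Real.rpow_neg (by positivity)]
    ring_nf
  rw [cauchyRadius, div_pow, hpow, div_eq_mul_inv, mul_inv, inv_inv, inv_inv, mul_comm]

theorem GS_function_derivative_bound_general (θ : ℝ) :
    ∃ C : ℝ, 1 ≤ C ∧
      ∀ (k : ℕ) (x : ℝ),
        |iteratedDeriv k (fun y : ℝ => Real.exp (-((1 + y ^ 2) ^ (1 / (2 * θ))))) x|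
          ≤ C ^ k * (Nat.factorial k : ℝ) * Real.exp (-((1 + x ^ 2) ^ (1 / (2 * θ))))
              * (1 + x ^ 2) ^ ((k : ℝ) * max (1 / θ - 1) 0 / 2) := by
  set s := 1 / (2 * θ)
  set m := max (1 / θ - 1) 0
  set A := |s| * 2 ^ |s - 1|
  have hA : 0 ≤ A := by positivity
  have hm : 2 * s - 1 ≤ m := by
    have : 2 * s = 1 / θ := by simp only [s]; ring
    linarith [le_max_left (1 / θ - 1) 0]
  refine ⟨6 * Real.exp A, by linarith [Real.one_le_exp hA], fun k x => ?_⟩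
  rcases k.eq_zero_or_pos with rfl | hk
  · simp [abs_of_pos (Real.exp_pos _)]
  calc _ ≤ k ! * (Real.exp A * Real.exp (-(1 + x ^ 2) ^ s)) / cauchyRadius m x ^ k :=
        abs_iteratedDeriv_exp_neg_rpow_le (le_max_right _ _) hm k x
    _ = 6 ^ k * k ! * Real.exp (-(1 + x ^ 2) ^ s) * (1 + x ^ 2) ^ ((k : ℝ) * m / 2)
          * Real.exp A := by
        rw [div_eq_mul_inv, inv_cauchyRadius_pow]
        ring
    _ ≤ 6 ^ k * k ! * Real.exp (-(1 + x ^ 2) ^ s) * (1 + x ^ 2) ^ ((k : ℝ) * m / 2)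
          * Real.exp A ^ k := by
        gcongr
        exact le_self_pow₀ (Real.one_le_exp hA) hk.ne'
    _ = _ := by ring

theorem GS_function_derivative_bound (θ : ℝ) (hθ : 0 < θ) :
    ∃ C : ℝ, 1 ≤ C ∧
      ∀ (k : ℕ) (x : ℝ),
        |iteratedDeriv k (fun y : ℝ => Real.exp (-((1 + y ^ 2) ^ (1 / (2 * θ))))) x|
          ≤ C ^ k * (Nat.factorial k : ℝ) * Real.exp (-((1 + x ^ 2) ^ (1 / (2 * θ))))
              * (1 + x ^ 2) ^ ((k : ℝ) * max (1 / θ - 1) 0 / 2) :=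
  GS_function_derivative_bound_general θ
end

section
/- Let θ, s > 0 with θ + s > 1, and let f : ℝ^d → ℂ be smooth. Suppose there exist C, h > 0 with |x^α D^β f(x)| ≤ C h^{|α|+|β|} (α!)^θ (β!)^s for all multiindices α, β and x ∈ ℝ^d. Then for every a > 0 with 2a(√d · h)^{1/θ} ≤ θ there is C' > 0 such that e^{a|x|^{1/θ}} |D^β f(x)| ≤ C' h^{|β|} (β!)^s for all β and x. -/
/-- Partial derivative in the `j`-th coordinate of a function on `ℝ^d`. -/
noncomputable def pderivCoord {d : ℕ} (j : Fin d) (f : (Fin d → ℝ) → ℂ) :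
    (Fin d → ℝ) → ℂ :=
  fun x => deriv (fun t => f (Function.update x j t)) (x j)

/-- The mixed partial derivative `∂^β` for a multiindex `β : Fin d → ℕ`. -/
noncomputable def mderiv {d : ℕ} (β : Fin d → ℕ) (f : (Fin d → ℝ) → ℂ) :
    (Fin d → ℝ) → ℂ :=
  (List.finRange d).foldr (fun j F => (pderivCoord j)^[β j] F) f

lemma exp_half_le_of_forall (u B : ℝ)
    (hB : ∀ k : ℕ, u ^ k / (k.factorial : ℝ) ≤ B) : Real.exp (u / 2) ≤ 2 * B := by
  have h1 : Real.exp (u / 2) = ∑' k : ℕ, (u / 2) ^ k / (k.factorial : ℝ) := by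
    rw [Real.exp_eq_exp_ℝ, NormedSpace.exp_eq_tsum_div]
  have h2 : ∀ k : ℕ, (u / 2) ^ k / (k.factorial : ℝ) ≤ (1 / 2 : ℝ) ^ k * B := by
    intro k
    have he : (u / 2) ^ k / (k.factorial : ℝ) = (1 / 2 : ℝ) ^ k * (u ^ k / k.factorial) := by
      rw [div_pow, one_div, inv_pow]; ring
    rw [he]
    exact mul_le_mul_of_nonneg_left (hB k) (by positivity)
  calc Real.exp (u / 2) = ∑' k : ℕ, (u / 2) ^ k / (k.factorial : ℝ) := h1
    _ ≤ ∑' k : ℕ, (1 / 2 : ℝ) ^ k * B :=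
        Summable.tsum_le_tsum h2 (Real.summable_pow_div_factorial _) (summable_geometric_two.mul_right B)
    _ = 2 * B := by rw [tsum_mul_right, tsum_geometric_two]

theorem seminorm_equivalence_direction (d : ℕ) (hd : 1 ≤ d) (θ s : ℝ)
    (hθ : 0 < θ) (hs : 0 < s) (hθs : 1 < θ + s)
    (f : (Fin d → ℝ) → ℂ) (hf : ContDiff ℝ (⊤ : ℕ∞) f)
    (C h : ℝ) (hC : 0 < C) (hh : 0 < h)
    (hbound : ∀ (α β : Fin d → ℕ) (x : Fin d → ℝ),
      (∏ j, |x j| ^ α j) * ‖mderiv β f x‖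
        ≤ C * h ^ ((∑ j, α j) + (∑ j, β j))
            * ((∏ j, Nat.factorial (α j) : ℕ) : ℝ) ^ θ
            * ((∏ j, Nat.factorial (β j) : ℕ) : ℝ) ^ s) :
    ∀ a : ℝ, 0 < a → 2 * a * (Real.sqrt d * h) ^ (1 / θ) ≤ θ →
      ∃ C' : ℝ, 0 < C' ∧
        ∀ (β : Fin d → ℕ) (x : Fin d → ℝ),
          Real.exp (a * Real.sqrt (∑ j, x j ^ 2) ^ (1 / θ)) * ‖mderiv β f x‖
            ≤ C' * h ^ (∑ j, β j) * ((∏ j, Nat.factorial (β j) : ℕ) : ℝ) ^ s := by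
  intro a ha hcond
  refine ⟨(2 : ℝ) ^ θ * C, by positivity, ?_⟩
  intro β x
  set D := ‖mderiv β f x‖ with hDdef
  have hfacβ : (0 : ℝ) < ((∏ j, Nat.factorial (β j) : ℕ) : ℝ) := by
    have : 0 < ∏ j, Nat.factorial (β j) :=
      Finset.prod_pos fun j _ => Nat.factorial_pos _
    exact_mod_cast this
  set B := C * h ^ (∑ j, β j) * ((∏ j, Nat.factorial (β j) : ℕ) : ℝ) ^ s with hBdef
  have hBpos : 0 < B := by positivity
  have hD0 : 0 ≤ D := norm_nonneg _
  have goal_eq : (2 : ℝ) ^ θ * C * h ^ (∑ j, β j) * ((∏ j, Nat.factorial (β j) : ℕ) : ℝ) ^ s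
      = (2 : ℝ) ^ θ * B := by rw [hBdef]; ring
  rw [goal_eq]
  rcases eq_or_lt_of_le hD0 with h0 | hDpos
  · rw [← h0, mul_zero]; positivity
  -- maximal coordinate
  obtain ⟨j₀, -, hj₀⟩ := Finset.exists_max_image Finset.univ (fun j => |x j|)
    ⟨⟨0, hd⟩, Finset.mem_univ _⟩
  set t := Real.sqrt (∑ j, x j ^ 2) with htdef
  have ht0 : 0 ≤ t := Real.sqrt_nonneg _
  have hsd : (0 : ℝ) < Real.sqrt d := Real.sqrt_pos.2 (by exact_mod_cast hd)
  have htm : t ≤ Real.sqrt d * |x j₀| := by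
    have h1 : (∑ j, x j ^ 2) ≤ (d : ℝ) * |x j₀| ^ 2 := by
      calc (∑ j, x j ^ 2) ≤ ∑ _j : Fin d, |x j₀| ^ 2 := by
            apply Finset.sum_le_sum
            intro j _
            rw [← sq_abs (x j)]
            exact pow_le_pow_left₀ (abs_nonneg _) (hj₀ j (Finset.mem_univ j)) 2
        _ = (d : ℝ) * |x j₀| ^ 2 := by
            rw [Finset.sum_const, Finset.card_univ, Fintype.card_fin, nsmul_eq_mul]
    calc t ≤ Real.sqrt ((d : ℝ) * |x j₀| ^ 2) := Real.sqrt_le_sqrt h1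
      _ = Real.sqrt d * |x j₀| := by
          rw [Real.sqrt_mul (by positivity), Real.sqrt_sq (abs_nonneg _)]
  -- per-k key bound
  set v := t / (Real.sqrt d * h) with hvdef
  have hv0 : 0 ≤ v := by positivity
  have key : ∀ k : ℕ, v ^ k * D ≤ (k.factorial : ℝ) ^ θ * B := by
    intro k
    have hα := hbound (fun j' => if j' = j₀ then k else 0) β x
    have e1 : (∏ j, |x j| ^ (if j = j₀ then k else 0)) = |x j₀| ^ k := by
      rw [Finset.prod_eq_single j₀ (fun b _ hb => by simp [hb]) (by simp)]
      simp
    have e2 : (∑ j, (if j = j₀ then k else 0)) = k := by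
      rw [Finset.sum_eq_single j₀ (fun b _ hb => by simp [hb]) (by simp)]
      simp
    have e3 : (∏ j, Nat.factorial (if j = j₀ then k else 0)) = k.factorial := by
      rw [Finset.prod_eq_single j₀ (fun b _ hb => by simp [hb]) (by simp)]
      simp
    rw [e1, e2, e3] at hα
    have hα' : |x j₀| ^ k * D ≤ h ^ k * ((k.factorial : ℝ) ^ θ * B) := by
      calc |x j₀| ^ k * D ≤ C * h ^ (k + ∑ j, β j) * (k.factorial : ℝ) ^ θ
              * ((∏ j, Nat.factorial (β j) : ℕ) : ℝ) ^ s := hα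
        _ = h ^ k * ((k.factorial : ℝ) ^ θ * B) := by rw [hBdef, pow_add]; ring
    have hvle : v ^ k ≤ |x j₀| ^ k / h ^ k := by
      rw [hvdef, div_pow, div_le_div_iff₀ (by positivity) (by positivity)]
      have : t ^ k ≤ (Real.sqrt d * |x j₀|) ^ k := pow_le_pow_left₀ ht0 htm k
      calc t ^ k * h ^ k ≤ (Real.sqrt d * |x j₀|) ^ k * h ^ k := by
            exact mul_le_mul_of_nonneg_right this (by positivity)
        _ = |x j₀| ^ k * (Real.sqrt d * h) ^ k := by ring
    calc v ^ k * D ≤ (|x j₀| ^ k / h ^ k) * D :=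
          mul_le_mul_of_nonneg_right hvle hD0
      _ ≤ (k.factorial : ℝ) ^ θ * B := by
          rw [div_mul_eq_mul_div, div_le_iff₀ (by positivity)]
          calc |x j₀| ^ k * D ≤ h ^ k * ((k.factorial : ℝ) ^ θ * B) := hα'
            _ = (k.factorial : ℝ) ^ θ * B * h ^ k := by ring
  -- transfer to u and w
  set u := v ^ (1 / θ) with hudef
  have hu0 : 0 ≤ u := Real.rpow_nonneg hv0 _
  set R := B / D with hRdef
  have hR : 0 < R := div_pos hBpos hDpos
  set w := R ^ (1 / θ) with hwdef
  have hw0 : 0 < w := Real.rpow_pos_of_pos hR _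
  have claim2 : ∀ k : ℕ, u ^ k / (k.factorial : ℝ) ≤ w := by
    intro k
    have hfk : (0 : ℝ) < (k.factorial : ℝ) := by exact_mod_cast k.factorial_pos
    have h1 : v ^ k ≤ (k.factorial : ℝ) ^ θ * R := by
      rw [hRdef, ← mul_div_assoc, le_div_iff₀ hDpos]
      exact key k
    have h2 : v ^ k = (u ^ k) ^ θ := by
      rw [hudef, ← Real.rpow_natCast (v ^ (1 / θ)) k, ← Real.rpow_mul hv0,
        ← Real.rpow_mul hv0, show 1 / θ * (k : ℝ) * θ = (k : ℝ) by field_simp,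
        Real.rpow_natCast]
    have h3 : (k.factorial : ℝ) ^ θ * R = ((k.factorial : ℝ) * w) ^ θ := by
      rw [Real.mul_rpow hfk.le hw0.le, hwdef, one_div, Real.rpow_inv_rpow hR.le hθ.ne']
    have h4 : (u ^ k) ^ θ ≤ ((k.factorial : ℝ) * w) ^ θ := by
      rw [← h2, ← h3]; exact h1
    have h5 : u ^ k ≤ (k.factorial : ℝ) * w :=
      (Real.rpow_le_rpow_iff (pow_nonneg hu0 k) (by positivity) hθ).1 h4
    rw [div_le_iff₀ hfk]
    linarith [h5]
  have hexp : Real.exp (u / 2) ≤ 2 * w := exp_half_le_of_forall u w claim2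
  -- relate the exponents
  have htv : t = Real.sqrt d * h * v := by
    rw [hvdef]; field_simp
  have ht1θ : t ^ (1 / θ) = (Real.sqrt d * h) ^ (1 / θ) * u := by
    rw [htv, Real.mul_rpow (by positivity) hv0, hudef]
  have hexparg : a * t ^ (1 / θ) ≤ θ * u / 2 := by
    rw [ht1θ]
    have : 2 * a * (Real.sqrt d * h) ^ (1 / θ) * u ≤ θ * u :=
      mul_le_mul_of_nonneg_right hcond hu0
    nlinarith
  have step1 : Real.exp (a * t ^ (1 / θ)) ≤ Real.exp (u / 2) ^ θ := by
    rw [← Real.exp_mul]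
    apply Real.exp_le_exp.2
    calc a * t ^ (1 / θ) ≤ θ * u / 2 := hexparg
      _ = u / 2 * θ := by ring
  have step2 : Real.exp (u / 2) ^ θ ≤ (2 * w) ^ θ :=
    Real.rpow_le_rpow (Real.exp_pos _).le hexp hθ.le
  have step3 : (2 * w) ^ θ = (2 : ℝ) ^ θ * R := by
    rw [Real.mul_rpow (by norm_num) hw0.le, hwdef, one_div,
      Real.rpow_inv_rpow hR.le hθ.ne']
  have final : Real.exp (a * t ^ (1 / θ)) * D ≤ (2 : ℝ) ^ θ * B := by
    have : Real.exp (a * t ^ (1 / θ)) ≤ (2 : ℝ) ^ θ * R :=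
      (step1.trans step2).trans_eq step3
    calc Real.exp (a * t ^ (1 / θ)) * D ≤ (2 : ℝ) ^ θ * R * D :=
          mul_le_mul_of_nonneg_right this hD0
      _ = (2 : ℝ) ^ θ * B := by rw [hRdef]; field_simp
  exact final
end
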